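/- arXiv:0706.0431 — 9 statements merged into one kernel-verified Lean document; each statement's English description precedes it below -/
import Mathlib

section
/- Let Σ be a finite totally ordered alphabet and L ⊆ Σ^* an infinite regular language. Then for all integers p ≥ 1 and q ≥ 0, the arithmetic progression {q + kp : k ∈ ℕ} is S-recognizable; that is, the language {w ∈ L : ind_L(w) ∈ {q + kp : k ∈ ℕ}} is regular. -/
/-- Genealogical (shortlex) order on words. -/
def ShortLex {α : Type*} [LinearOrder α] (u w : List α) : Prop :=
  u.length < w.length ∨ (u.length = w.length ∧ List.Lex (· < ·) u w)

/-- `genIndex L w` is the number of words of `L` genealogically smaller than `w`. -/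
noncomputable def genIndex {α : Type*} [LinearOrder α] (L : Language α) (w : List α) : ℕ :=
  Set.ncard {u | u ∈ L ∧ ShortLex u w}

/-- `X ⊆ ℕ` is `S`-recognizable for the abstract numeration system `S = (L, Σ, <)`. -/
def SRecognizable {α : Type*} [LinearOrder α] (L : Language α) (X : Set ℕ) : Prop :=
  Language.IsRegular {w | w ∈ L ∧ genIndex L w ∈ X}

/-!
Fix a DFA `M` for `L` and a finite semiring `S`. For a word `u`, count in `S`, for each state `s`,
the words `y` that are genealogically smaller than `u` with `M.eval y = s`; summing over accepting
states gives the index of `u` cast into `S`. Since `[]` lies below every nonempty word and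
`y ++ [b] < u ++ [a]` iff `y < u`, or `y = u` and `b < a`, this vector after reading `u ++ [a]` is
determined by `M.eval u`, the vector for `u`, and `a`. So a finite automaton computes the index
cast into `S`, and every preimage of a subset of `S` is recognizable. The progression `q + pℕ` is
such a preimage for the quotient of the semiring `ℕ` identifying `n ≥ q` with `n + p`.
-/

open Finset

theorem List.lex_append_singleton_iff {α : Type*} {r : α → α → Prop} {y u : List α}
    (h : y.length = u.length) (b a : α) :
    Lex r (y ++ [b]) (u ++ [a]) ↔ Lex r y u ∨ y = u ∧ r b a := by
  induction y generalizing u with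
  | nil =>
    obtain rfl : u = [] := List.length_eq_zero_iff.mp h.symm
    simp [cons_lex_cons_iff]
  | cons c y ih =>
    obtain ⟨d, u, rfl⟩ := List.exists_cons_of_length_eq_add_one h.symm
    simp only [cons_append, cons_lex_cons_iff, ih (Nat.succ.inj h), cons.injEq]
    tauto

section ShortLex

variable {α : Type*} [LinearOrder α]

theorem ShortLex.irrefl (u : List α) : ¬ShortLex u u := by
  simp [ShortLex]

theorem ShortLex.length_le {y u : List α} (h : ShortLex y u) : y.length ≤ u.length :=
  h.elim le_of_lt fun h => h.1.le

theorem not_shortLex_nil (y : List α) : ¬ShortLex y [] := by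
  simp [ShortLex]

theorem shortLex_nil_append_singleton (u : List α) (a : α) : ShortLex [] (u ++ [a]) :=
  Or.inl (by simp)

theorem shortLex_append_singleton_iff {y u : List α} {b a : α} :
    ShortLex (y ++ [b]) (u ++ [a]) ↔ ShortLex y u ∨ y = u ∧ b < a := by
  simp only [ShortLex, List.length_append, List.length_singleton, Nat.add_right_cancel_iff,
    Nat.add_lt_add_iff_right]
  constructor
  · rintro (h | ⟨h, hlex⟩)
    · exact Or.inl (Or.inl h)
    · rcases (List.lex_append_singleton_iff h b a).mp hlex with hlex | hba
      · exact Or.inl (Or.inr ⟨h, hlex⟩)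
      · exact Or.inr hba
  · rintro ((h | ⟨h, hlex⟩) | ⟨rfl, hba⟩)
    · exact Or.inl h
    · exact Or.inr ⟨h, (List.lex_append_singleton_iff h b a).mpr (Or.inl hlex)⟩
    · exact Or.inr ⟨rfl, (List.lex_append_singleton_iff rfl b a).mpr (Or.inr ⟨rfl, hba⟩)⟩

variable [Fintype α]

theorem finite_setOf_shortLex (u : List α) : {y | ShortLex y u}.Finite :=
  (List.finite_length_le α u.length).subset fun _ => ShortLex.length_le

noncomputable def shortLexBelow (u : List α) : Finset (List α) :=
  (finite_setOf_shortLex u).toFinset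

@[simp]
theorem mem_shortLexBelow {y u : List α} : y ∈ shortLexBelow u ↔ ShortLex y u :=
  Set.Finite.mem_toFinset _

theorem shortLexBelow_nil : shortLexBelow ([] : List α) = ∅ := by
  ext y
  simp [not_shortLex_nil]

theorem shortLexBelow_append_singleton (u : List α) (a : α) :
    shortLexBelow (u ++ [a]) = insert []
      (((shortLexBelow u ×ˢ univ) ∪ ({u} ×ˢ ({b | b < a} : Finset α))).image
        fun z => z.1 ++ [z.2]) := by
  ext y
  rcases List.eq_nil_or_concat' y with rfl | ⟨y, b, rfl⟩
  · simp [shortLex_nil_append_singleton]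
  · simp [shortLex_append_singleton_iff, List.append_singleton_inj, @eq_comm _ u, and_comm]

theorem sum_shortLexBelow_append_singleton {M : Type*} [AddCommMonoid M] (f : List α → M)
    (u : List α) (a : α) :
    ∑ y ∈ shortLexBelow (u ++ [a]), f y =
      f [] + ∑ y ∈ shortLexBelow u, ∑ b, f (y ++ [b]) + ∑ b with b < a, f (u ++ [b]) := by
  classical
  have hdisj : Disjoint (shortLexBelow u ×ˢ univ) ({u} ×ˢ ({b | b < a} : Finset α)) := by
    simp only [Finset.disjoint_left, mem_product, mem_shortLexBelow, mem_singleton]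
    rintro ⟨y, b⟩ ⟨hy, -⟩ ⟨rfl, -⟩
    exact ShortLex.irrefl y hy
  rw [shortLexBelow_append_singleton, sum_insert (by simp), sum_image (by simp),
    sum_union hdisj, sum_product, sum_product, sum_singleton, add_assoc]

theorem genIndex_eq_card (L : Language α) (w : List α) [DecidablePred (· ∈ L)] :
    genIndex L w = #{y ∈ shortLexBelow w | y ∈ L} := by
  rw [genIndex, ← Set.ncard_coe_finset]
  congr 1
  ext y
  simp [and_comm]

end ShortLex

namespace DFA

variable {α Q S : Type*} [LinearOrder α] [Fintype α] [Fintype Q] [DecidableEq Q]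
  [NonAssocSemiring S] (M : DFA α Q)

noncomputable def shortLexCount (u : List α) (s : Q) : S :=
  ∑ y ∈ shortLexBelow u, if M.eval y = s then 1 else 0

theorem sum_shortLexBelow_comp_eval (g : Q → S) (u : List α) :
    ∑ y ∈ shortLexBelow u, g (M.eval y) = ∑ s, M.shortLexCount u s * g s := by
  simp only [shortLexCount, sum_mul, ite_mul, one_mul, zero_mul]
  rw [sum_comm]
  simp

theorem shortLexCount_append_singleton (u : List α) (a : α) (t : Q) :
    (M.shortLexCount (u ++ [a]) t : S) =
      (if M.start = t then 1 else 0)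
        + ∑ s, M.shortLexCount u s * ∑ b, (if M.step s b = t then 1 else 0)
        + ∑ b with b < a, (if M.step (M.eval u) b = t then 1 else 0) := by
  rw [shortLexCount, sum_shortLexBelow_append_singleton, ← sum_shortLexBelow_comp_eval, eval_nil]
  simp only [eval_append_singleton]

noncomputable def shortLexCounter (A : Set (Q × (Q → S))) : DFA α (Q × (Q → S)) where
  step z a := (M.step z.1 a, fun t =>
    (if M.start = t then 1 else 0)
      + ∑ s, z.2 s * ∑ b, (if M.step s b = t then 1 else 0)
      + ∑ b with b < a, (if M.step z.1 b = t then 1 else 0))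
  start := (M.start, 0)
  accept := A

theorem shortLexCounter_eval (A : Set (Q × (Q → S))) (u : List α) :
    (M.shortLexCounter A).eval u = (M.eval u, M.shortLexCount u) := by
  induction u using List.reverseRecOn with
  | nil =>
    ext s
    · rfl
    · simp [shortLexCount, shortLexCounter, shortLexBelow_nil]
  | append_singleton u a ih =>
    rw [eval_append_singleton, ih, eval_append_singleton]
    ext t
    · rfl
    · simp only [shortLexCounter, M.shortLexCount_append_singleton]

end DFA

theorem Language.IsRegular.setOf_genIndex_cast_mem {α S : Type*} [LinearOrder α] [Fintype α]
    [NonAssocSemiring S] [Finite S] {L : Language α} (hL : L.IsRegular) (T : Set S) :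
    Language.IsRegular {w | (genIndex L w : S) ∈ T} := by
  classical
  obtain ⟨Q, _, M, rfl⟩ := hL
  have := Fintype.ofFinite S
  refine Language.isRegular_iff.mpr ⟨_, inferInstance,
    M.shortLexCounter {z | ∑ s, z.2 s * (if s ∈ M.accept then 1 else 0) ∈ T}, ?_⟩
  ext w
  have hcast : (genIndex M.accepts w : S) =
      ∑ s, M.shortLexCount w s * (if s ∈ M.accept then 1 else 0) := by
    rw [genIndex_eq_card, ← M.sum_shortLexBelow_comp_eval, card_filter, Nat.cast_sum]
    simp [DFA.mem_accepts]
  rw [DFA.mem_accepts, DFA.shortLexCounter_eval]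
  change _ ∈ T ↔ (genIndex M.accepts w : S) ∈ T
  rw [hcast]

theorem sRecognizable_natCast_preimage {α S : Type*} [LinearOrder α] [Fintype α]
    [NonAssocSemiring S] [Finite S] {L : Language α} (hL : L.IsRegular) (T : Set S) :
    SRecognizable L (Nat.cast ⁻¹' T) :=
  hL.inf (hL.setOf_genIndex_cast_mem T)

namespace Nat

theorem min_min_mul_min (a c q : ℕ) : min (min a q * min c q) q = min (a * c) q := by
  rcases Nat.eq_zero_or_pos a with rfl | ha0
  · simp
  rcases Nat.eq_zero_or_pos c with rfl | hc0
  · simp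
  rcases lt_or_ge a q with ha | ha <;> rcases lt_or_ge c q with hc | hc
  · rw [min_eq_left ha.le, min_eq_left hc.le]
  · rw [min_eq_left ha.le, min_eq_right hc, min_eq_right (by nlinarith),
      min_eq_right (by nlinarith)]
  · rw [min_eq_right ha, min_eq_left hc.le, min_eq_right (by nlinarith),
      min_eq_right (by nlinarith)]
  · rw [min_eq_right ha, min_eq_right hc, min_eq_right (by nlinarith),
      min_eq_right (by nlinarith)]

/-- `n` and `m` are related iff they are equal, or both at least `q` and congruent modulo `p`. -/
def indexPeriodCon (q p : ℕ) : RingCon ℕ where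
  r a b := min a q = min b q ∧ a ≡ b [MOD p]
  iseqv := ⟨fun _ => ⟨rfl, rfl⟩, fun h => ⟨h.1.symm, h.2.symm⟩,
    fun h k => ⟨h.1.trans k.1, h.2.trans k.2⟩⟩
  add' h k := ⟨by omega, h.2.add k.2⟩
  mul' {a b c d} h k := ⟨by rw [← min_min_mul_min, h.1, k.1, min_min_mul_min], h.2.mul k.2⟩

theorem finite_indexPeriodCon_quotient (q : ℕ) {p : ℕ} (hp : 0 < p) :
    Finite (indexPeriodCon q p).Quotient := by
  refine Finite.of_surjective (fun i : Fin (q + p) => (indexPeriodCon q p).toQuotient i)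
    fun x => ?_
  induction x using Quotient.inductionOn' with | h n => ?_
  rcases lt_or_ge n q with hn | hn
  · exact ⟨⟨n, by omega⟩, rfl⟩
  refine ⟨⟨q + (n - q) % p, by have := Nat.mod_lt (n - q) hp; omega⟩, ?_⟩
  refine (RingCon.eq _).mpr ⟨by dsimp only; omega, ?_⟩
  calc q + (n - q) % p ≡ q + (n - q) [MOD p] := (Nat.mod_modEq _ _).add_left q
    _ = n := by omega

theorem indexPeriodCon_natCast_eq_iff {q p n : ℕ} :
    (n : (indexPeriodCon q p).Quotient) = q ↔ ∃ k, n = q + k * p := by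
  rw [← RingCon.coe_natCast, ← RingCon.coe_natCast, Nat.cast_id, Nat.cast_id, RingCon.eq]
  constructor
  · rintro ⟨hmin, hmod⟩
    have hqn : q ≤ n := by omega
    obtain ⟨k, hk⟩ := (Nat.modEq_iff_dvd' hqn).mp hmod.symm
    exact ⟨k, by rw [mul_comm]; omega⟩
  · rintro ⟨k, rfl⟩
    refine ⟨by omega, ((Nat.modEq_iff_dvd' (Nat.le_add_right q _)).mpr ?_).symm⟩
    simp

end Nat

theorem arithmetic_progression_SRecognizable_general {α : Type*} [Fintype α] [LinearOrder α]
    (L : Language α) (hreg : L.IsRegular)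
    (p q : ℕ) (hp : 1 ≤ p) :
    SRecognizable L {n | ∃ k : ℕ, n = q + k * p} := by
  have := Nat.finite_indexPeriodCon_quotient q hp
  have hAP : {n | ∃ k : ℕ, n = q + k * p} =
      Nat.cast ⁻¹' {(q : (Nat.indexPeriodCon q p).Quotient)} := by
    ext n
    exact Nat.indexPeriodCon_natCast_eq_iff.symm
  rw [hAP]
  exact sRecognizable_natCast_preimage hreg _

/-- In any abstract numeration system, every arithmetic progression is `S`-recognizable. -/
theorem arithmetic_progression_SRecognizable {α : Type*} [Fintype α] [LinearOrder α]
    (L : Language α) (hreg : L.IsRegular) (hinf : L.Infinite)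
    (p q : ℕ) (hp : 1 ≤ p) :
    SRecognizable L {n | ∃ k : ℕ, n = q + k * p} :=
  arithmetic_progression_SRecognizable_general L hreg p q hp
end

section
/- Let Σ be a finite totally ordered alphabet and L ⊆ Σ^* an infinite regular language that is slender, i.e., there exists d such that #(L ∩ Σ^n) ≤ d for all n ≥ 0. If X ⊆ ℕ is S-recognizable, then for every λ ∈ ℕ the set λX = {λx : x ∈ X} is S-recognizable. -/
/-- The number of words of length `n` in `L`. -/
noncomputable def uCount {α : Type*} (L : Language α) (n : ℕ) : ℕ :=
  Set.ncard {w | w ∈ L ∧ w.length = n}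

open Set Function

section Periodicity

variable {β : Type*}

def EventuallyPeriodic (f : ℕ → β) (N P : ℕ) : Prop :=
  ∀ n, N ≤ n → f (n + P) = f n

namespace EventuallyPeriodic

variable {f g : ℕ → β} {N P : ℕ}

lemma comp (hf : EventuallyPeriodic f N P) {γ : Type*} (φ : β → γ) :
    EventuallyPeriodic (φ ∘ f) N P :=
  fun n hn => congrArg φ (hf n hn)

lemma add_mul (hf : EventuallyPeriodic f N P) (k : ℕ) {n : ℕ} (hn : N ≤ n) :
    f (n + k * P) = f n := by
  induction k with
  | zero => simp
  | succ k ih => rw [Nat.succ_mul, ← add_assoc, hf _ (by omega), ih]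

lemma apply_eq_apply_mod (hf : EventuallyPeriodic f N P) {n : ℕ} (hn : N ≤ n) :
    f n = f (N + (n - N) % P) := by
  conv_lhs => rw [show n = N + (n - N) % P + (n - N) / P * P by
    have := Nat.mod_add_div' (n - N) P; omega]
  exact hf.add_mul _ (Nat.le_add_right _ _)

lemma finite_range (hf : EventuallyPeriodic f N P) (hP : 0 < P) : (range f).Finite := by
  refine ((finite_Iio (N + P)).image f).subset ?_
  rintro _ ⟨n, rfl⟩
  rcases lt_or_ge n N with hn | hn
  · exact ⟨n, by simp only [mem_Iio]; omega, rfl⟩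
  · exact ⟨_, by simp only [mem_Iio]; have := Nat.mod_lt (n - N) hP; omega,
      (hf.apply_eq_apply_mod hn).symm⟩

lemma eq_of_forall_lt (hf : EventuallyPeriodic f N P) (hg : EventuallyPeriodic g N P)
    (hP : 0 < P) (h : ∀ n < N + P, f n = g n) : f = g := by
  funext n
  rcases lt_or_ge n N with hn | hn
  · exact h n (by omega)
  · rw [hf.apply_eq_apply_mod hn, hg.apply_eq_apply_mod hn]
    exact h _ (by have := Nat.mod_lt (n - N) hP; omega)

end EventuallyPeriodic

lemma finite_setOf_eventuallyPeriodic {S : Set β} (hS : S.Finite) {N P : ℕ} (hP : 0 < P) :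
    {f : ℕ → β | EventuallyPeriodic f N P ∧ ∀ n, f n ∈ S}.Finite := by
  let restrict : (ℕ → β) → Fin (N + P) → β := fun f i => f i
  refine Finite.of_finite_image (f := restrict)
    ((Set.Finite.pi (t := fun _ : Fin (N + P) => S) fun _ => hS).subset ?_) ?_
  · rintro _ ⟨f, ⟨-, hfS⟩, rfl⟩
    exact fun i _ => hfS i
  · intro f hf g hg hfg
    exact hf.1.eq_of_forall_lt hg.1 hP fun n hn => congrFun hfg ⟨n, hn⟩

lemma exists_eventuallyPeriodic_of_finite_range {f : ℕ → β} (hf : (range f).Finite)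
    (hsucc : ∀ m n, f m = f n → f (m + 1) = f (n + 1)) :
    ∃ N P, 0 < P ∧ EventuallyPeriodic f N P := by
  obtain ⟨i, -, j, -, hij, hfij⟩ :=
    Set.infinite_univ.exists_ne_map_eq_of_mapsTo (fun n _ => mem_range_self n) hf
  wlog hlt : i < j generalizing i j
  · exact this j i hij.symm hfij.symm (by omega)
  refine ⟨i, j - i, by omega, fun n hn => ?_⟩
  induction n, hn using Nat.le_induction with
  | base => rw [Nat.add_sub_cancel' hlt.le, hfij]
  | succ n _ ih => rw [show n + 1 + (j - i) = n + (j - i) + 1 by omega, hsucc _ _ ih]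

end Periodicity

def UltimatelyPeriodic (X : Set ℕ) : Prop :=
  ∃ T p, 0 < p ∧ EventuallyPeriodic (· ∈ X) T p

lemma EventuallyPeriodic.preimage_add {Y : Set ℕ} {T p : ℕ}
    (hY : EventuallyPeriodic (· ∈ Y) T p) : EventuallyPeriodic (fun h => (h + ·) ⁻¹' Y) T p :=
  fun h hh => ext fun r => by
    simpa only [mem_preimage, add_right_comm h p r] using (hY (h + r) (by omega)).to_iff

lemma UltimatelyPeriodic.mul {X : Set ℕ} (hX : UltimatelyPeriodic X) (lam : ℕ) :
    UltimatelyPeriodic {m | ∃ x ∈ X, m = lam * x} := by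
  obtain ⟨T, p, hp, hX⟩ := hX
  rcases Nat.eq_zero_or_pos lam with rfl | hlam
  · refine ⟨1, 1, one_pos, fun n hn => ?_⟩
    simp only [zero_mul, eq_iff_iff, mem_ofPred_eq]
    constructor <;> rintro ⟨x, -, hx⟩ <;> omega
  · have hmem : ∀ n, n ∈ {m | ∃ x ∈ X, m = lam * x} ↔ lam ∣ n ∧ n / lam ∈ X := by
      intro n
      constructor
      · rintro ⟨x, hx, rfl⟩
        exact ⟨dvd_mul_right lam x, by rwa [Nat.mul_div_cancel_left x hlam]⟩
      · rintro ⟨⟨x, rfl⟩, hx⟩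
        exact ⟨x, by rwa [Nat.mul_div_cancel_left x hlam] at hx, rfl⟩
    refine ⟨lam * T, lam * p, Nat.mul_pos hlam hp, fun n hn => ?_⟩
    have hT : T ≤ n / lam := (Nat.le_div_iff_mul_le hlam).mpr (by rw [mul_comm]; exact hn)
    simp only [hmem, Nat.dvd_add_left (dvd_mul_right lam p),
      Nat.add_mul_div_left _ _ hlam, hX _ hT]

lemma Set.ncard_eq_sum_ncard_preimage_cons {α : Type*} [Fintype α] {S : Set (List α)}
    (hS : S.Finite) (hnil : [] ∉ S) : S.ncard = ∑ a, (List.cons a ⁻¹' S).ncard := by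
  have hS_eq : S = ⋃ a, List.cons a '' (List.cons a ⁻¹' S) := by
    ext (_ | ⟨a, t⟩) <;> simp [hnil]
  have hdisj : Pairwise (Disjoint on fun a => List.cons a '' (List.cons a ⁻¹' S)) := by
    intro a b hab
    simp only [Function.onFun, disjoint_left, mem_image]
    rintro _ ⟨t, -, rfl⟩ ⟨t', -, h⟩
    exact hab (List.cons.inj h).1.symm
  calc S.ncard = (⋃ a, List.cons a '' (List.cons a ⁻¹' S)).ncard := congrArg ncard hS_eq
    _ = ∑ a, (List.cons a ⁻¹' S).ncard := by
      rw [ncard_iUnion_of_finite (fun a => (hS.subset (image_preimage_subset _ _))) hdisj,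
        finsum_eq_sum_of_fintype]
      simp only [ncard_image_of_injective _ List.cons_injective]

namespace Language

variable {α : Type*}

def lengthSlice (K : Language α) (n : ℕ) : Set (List α) :=
  {w | w ∈ K ∧ w.length = n}

noncomputable def shorterCount (K : Language α) (n : ℕ) : ℕ :=
  {w | w ∈ K ∧ w.length < n}.ncard

lemma cons_preimage_lengthSlice (K : Language α) (a : α) (n : ℕ) :
    List.cons a ⁻¹' K.lengthSlice (n + 1) = (K.leftQuotient [a]).lengthSlice n := by
  ext t
  simp [lengthSlice, mem_leftQuotient]

lemma shorterCount_zero (K : Language α) : K.shorterCount 0 = 0 := by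
  simp [shorterCount]

section Counting

variable [Finite α] (K : Language α)

lemma finite_lengthSlice (n : ℕ) : (K.lengthSlice n).Finite :=
  (List.finite_length_eq α n).subset fun _ h => h.2

lemma uCount_succ [Fintype α] (n : ℕ) :
    uCount K (n + 1) = ∑ a, uCount (K.leftQuotient [a]) n := by
  rw [uCount, ← lengthSlice, Set.ncard_eq_sum_ncard_preimage_cons (K.finite_lengthSlice _)
    (fun h => by simp [lengthSlice] at h)]
  simp only [cons_preimage_lengthSlice]
  rfl

lemma uCount_leftQuotient_le (u : List α) (n : ℕ) :
    uCount (K.leftQuotient u) n ≤ uCount K (u.length + n) := by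
  rw [uCount, ← ncard_image_of_injective _ (List.append_right_injective u)]
  refine ncard_le_ncard ?_ (K.finite_lengthSlice _)
  rintro _ ⟨v, ⟨hv, rfl⟩, rfl⟩
  exact ⟨hv, List.length_append⟩

lemma shorterCount_succ (n : ℕ) : K.shorterCount (n + 1) = K.shorterCount n + uCount K n := by
  have hfin : {w | w ∈ K ∧ w.length < n}.Finite :=
    (List.finite_length_lt α n).subset fun _ h => h.2
  rw [shorterCount, shorterCount, uCount, ← lengthSlice,
    ← ncard_union_eq _ hfin (K.finite_lengthSlice n)]
  · congr 1
    ext w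
    simp only [lengthSlice, mem_ofPred_eq, mem_union, Nat.lt_succ_iff_lt_or_eq, and_or_left]
  · exact disjoint_left.mpr fun w h h' => (h.2.ne h'.2)

lemma shorterCount_mono : Monotone K.shorterCount :=
  monotone_nat_of_le_succ fun n => by rw [shorterCount_succ]; exact Nat.le_add_right _ _

lemma exists_le_shorterCount (hinf : K.Infinite) (T : ℕ) : ∃ n, T ≤ K.shorterCount n := by
  obtain ⟨s, hsK, hs, rfl⟩ := hinf.exists_subset_ncard_eq T
  obtain ⟨B, hB⟩ := (hs.image List.length).bddAbove
  refine ⟨B + 1, ncard_le_ncard (fun w hw => ⟨hsK hw, ?_⟩)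
    ((List.finite_length_lt α _).subset fun _ h => h.2)⟩
  exact Nat.lt_succ_of_le (hB (mem_image_of_mem _ hw))

lemma exists_shorterCount_add_mul (K : Language α) (hinf : K.Infinite) {N P : ℕ} (hP : 0 < P)
    (h : EventuallyPeriodic (uCount K) N P) :
    ∃ C, 0 < C ∧ ∀ k ℓ, N ≤ ℓ → K.shorterCount (ℓ + k * P) = K.shorterCount ℓ + k * C := by
  set C := K.shorterCount (N + P) - K.shorterCount N
  have hperiod : ∀ ℓ, N ≤ ℓ → K.shorterCount (ℓ + P) = K.shorterCount ℓ + C := by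
    intro ℓ hℓ
    induction ℓ, hℓ using Nat.le_induction with
    | base => have := K.shorterCount_mono (Nat.le_add_right N P); omega
    | succ ℓ hℓ ih => rw [add_right_comm, shorterCount_succ, ih, h ℓ hℓ, shorterCount_succ]; ring
  have hiter : ∀ k ℓ, N ≤ ℓ → K.shorterCount (ℓ + k * P) = K.shorterCount ℓ + k * C := by
    intro k ℓ hℓ
    induction k with
    | zero => simp
    | succ k ih =>
      rw [Nat.succ_mul, ← add_assoc, hperiod _ (by omega), ih, Nat.succ_mul, add_assoc]
  refine ⟨C, Nat.pos_of_ne_zero fun hC => ?_, hiter⟩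
  obtain ⟨n, hn⟩ := K.exists_le_shorterCount hinf (K.shorterCount N + 1)
  have hle := K.shorterCount_mono (show n ≤ N + n * P by nlinarith)
  rw [hiter n N le_rfl, hC, mul_zero, add_zero] at hle
  omega

lemma exists_eq_shorterCount_add (K : Language α) (hinf : K.Infinite) (n : ℕ) :
    ∃ ℓ k, n = K.shorterCount ℓ + k ∧ k < uCount K ℓ := by
  classical
  have hex : ∃ ℓ, n < K.shorterCount (ℓ + 1) := by
    obtain ⟨m, hm⟩ := K.exists_le_shorterCount hinf (n + 1)
    exact ⟨m, hm.trans_lt' (by omega) |>.trans_le (K.shorterCount_mono (Nat.le_succ m))⟩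
  have hle : K.shorterCount (Nat.find hex) ≤ n := by
    rcases hfind : Nat.find hex with _ | j
    · simp [shorterCount_zero]
    · exact not_lt.mp (Nat.find_min hex (hfind ▸ Nat.lt_succ_self j))
  have hlt := Nat.find_spec hex
  rw [shorterCount_succ] at hlt
  exact ⟨_, _, (Nat.add_sub_cancel' hle).symm, by omega⟩

end Counting

section LexRank

variable [LinearOrder α] (K : Language α)

noncomputable def lexRank (v : List α) : ℕ :=
  (K.lengthSlice v.length ∩ Iio v).ncard

section Finite

variable [Finite α]

lemma genIndex_eq_shorterCount_add_lexRank (w : List α) :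
    genIndex K w = K.shorterCount w.length + K.lexRank w := by
  have hfin : {u | u ∈ K ∧ u.length < w.length}.Finite :=
    (List.finite_length_lt α _).subset fun _ h => h.2
  rw [genIndex, shorterCount, lexRank,
    ← ncard_union_eq _ hfin ((K.finite_lengthSlice _).subset inter_subset_left)]
  · congr 1
    ext u
    simp only [ShortLex, lengthSlice, mem_union, mem_inter_iff, mem_Iio, mem_ofPred_eq,
      and_or_left, and_assoc]
    rfl
  · exact disjoint_left.mpr fun u h h' => h.2.ne h'.1.2

lemma lexRank_le_uCount (v : List α) : K.lexRank v ≤ uCount K v.length :=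
  ncard_le_ncard inter_subset_left (K.finite_lengthSlice _)

lemma lexRank_lt_uCount {v : List α} (hv : v ∈ K) : K.lexRank v < uCount K v.length :=
  ncard_lt_ncard ⟨inter_subset_left, fun h => lt_irrefl v (h ⟨hv, rfl⟩).2⟩
    (K.finite_lengthSlice _)

lemma strictMonoOn_lexRank (n : ℕ) : StrictMonoOn K.lexRank (K.lengthSlice n) := by
  intro y hy w hw hyw
  rw [lexRank, lexRank, hy.2, hw.2]
  refine ncard_lt_ncard ⟨fun x hx => ⟨hx.1, lt_trans hx.2 hyw⟩, fun h => ?_⟩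
    ((K.finite_lengthSlice _).subset inter_subset_left)
  exact lt_irrefl y (h ⟨hy, hyw⟩).2

lemma surjOn_lexRank (n : ℕ) : SurjOn K.lexRank (K.lengthSlice n) (Iio (uCount K n)) := by
  have hsub : K.lexRank '' K.lengthSlice n ⊆ Iio (uCount K n) :=
    image_subset_iff.mpr fun w hw => hw.2 ▸ K.lexRank_lt_uCount hw.1
  refine (eq_of_subset_of_ncard_le hsub ?_ (finite_Iio _)).symm.subset
  rw [(K.strictMonoOn_lexRank n).injOn.ncard_image, ncard_Iio_nat]
  rfl

lemma shorterCount_add_mem_iff {L : Language α} {X : Set ℕ} {ℓ k : ℕ} (hk : k < uCount L ℓ) :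
    L.shorterCount ℓ + k ∈ X ↔
      k ∈ L.lexRank '' lengthSlice {w | w ∈ L ∧ genIndex L w ∈ X} ℓ := by
  constructor
  · intro hX
    obtain ⟨w, hw, rfl⟩ := L.surjOn_lexRank ℓ hk
    refine ⟨w, ⟨⟨hw.1, ?_⟩, hw.2⟩, rfl⟩
    rwa [genIndex_eq_shorterCount_add_lexRank, hw.2]
  · rintro ⟨w, ⟨⟨-, hwX⟩, rfl⟩, rfl⟩
    rwa [genIndex_eq_shorterCount_add_lexRank] at hwX

end Finite

lemma lexRank_cons [Fintype α] (a : α) (v : List α) :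
    K.lexRank (a :: v) =
      ∑ b with b < a, uCount (K.leftQuotient [b]) v.length + (K.leftQuotient [a]).lexRank v := by
  have hfiber : ∀ b, (List.cons b ⁻¹' (K.lengthSlice (a :: v).length ∩ Iio (a :: v))).ncard =
      if b < a then uCount (K.leftQuotient [b]) v.length
      else if b = a then (K.leftQuotient [a]).lexRank v else 0 := by
    intro b
    have hlt : ∀ t, b :: t < a :: v ↔ b < a ∨ b = a ∧ t < v := fun t => List.cons_lt_cons_iff
    rw [List.length_cons, preimage_inter, cons_preimage_lengthSlice]
    rcases lt_trichotomy b a with h | rfl | h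
    · rw [show List.cons b ⁻¹' Iio (a :: v) = univ from
        eq_univ_of_forall fun t => (hlt t).2 (Or.inl h), inter_univ, if_pos h]
      rfl
    · rw [show List.cons b ⁻¹' Iio (b :: v) = Iio v from
        ext fun t => (hlt t).trans <| (or_iff_right (lt_irrefl b)).trans (and_iff_right rfl),
        if_neg (lt_irrefl b), if_pos rfl]
      rfl
    · rw [show List.cons b ⁻¹' Iio (a :: v) = ∅ from eq_empty_of_forall_notMem fun t ht => by
        rcases (hlt t).1 ht with h' | ⟨h', -⟩ <;> order,
        inter_empty, ncard_empty, if_neg (not_lt_of_gt h), if_neg (ne_of_gt h)]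
  rw [lexRank, ncard_eq_sum_ncard_preimage_cons
    ((K.finite_lengthSlice _).subset inter_subset_left) (fun h => by simp [lengthSlice] at h),
    Finset.sum_congr rfl fun b _ => hfiber b,
    Finset.sum_ite, Finset.sum_ite_eq']
  simp

end LexRank

section Profile

variable [Fintype α] [LinearOrder α]

noncomputable def prefixRank (K : Language α) : List α → ℕ → ℕ
  | [], _ => 0
  | a :: u, m => ∑ b with b < a, uCount (K.leftQuotient [b]) (u.length + m) +
      (K.leftQuotient [a]).prefixRank u m

lemma lexRank_append (K : Language α) (u v : List α) :
    K.lexRank (u ++ v) = K.prefixRank u v.length + (K.leftQuotient u).lexRank v := by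
  induction u generalizing K with
  | nil => simp [prefixRank]
  | cons a u ih =>
    rw [List.cons_append, lexRank_cons, ih, prefixRank, List.length_append, ← add_assoc,
      ← leftQuotient_append]
    rfl

lemma genIndex_append (K : Language α) (u v : List α) :
    genIndex K (u ++ v) = K.shorterCount (u.length + v.length) + K.prefixRank u v.length +
      (K.leftQuotient u).lexRank v := by
  rw [genIndex_eq_shorterCount_add_lexRank, lexRank_append, List.length_append, add_assoc]

lemma eventuallyPeriodic_prefixRank {K : Language α} {N P : ℕ}
    (h : ∀ x, EventuallyPeriodic (uCount (K.leftQuotient x)) N P) (u : List α) :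
    EventuallyPeriodic (K.prefixRank u) N P := by
  induction u generalizing K with
  | nil => exact fun _ _ => rfl
  | cons a u ih =>
    intro m hm
    have hquot : ∀ x, EventuallyPeriodic (uCount ((K.leftQuotient [a]).leftQuotient x)) N P :=
      fun x => by rw [← leftQuotient_append]; exact h _
    simp only [prefixRank, ← add_assoc, ih hquot m hm]
    congr 1
    exact Finset.sum_congr rfl fun b _ => h [b] _ (by omega)

noncomputable def profile (K J : Language α) (ℓ : ℕ) : ℕ × Set ℕ :=
  (uCount K ℓ, K.lexRank '' J.lengthSlice ℓ)

lemma image_lexRank_lengthSlice_succ (K J : Language α) (ℓ : ℕ) :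
    K.lexRank '' J.lengthSlice (ℓ + 1) =
      ⋃ a, (∑ b with b < a, uCount (K.leftQuotient [b]) ℓ + ·) ''
        ((K.leftQuotient [a]).lexRank '' (J.leftQuotient [a]).lengthSlice ℓ) := by
  ext k
  simp only [mem_image, mem_iUnion]
  constructor
  · rintro ⟨_ | ⟨a, t⟩, ⟨hw, hlen⟩, rfl⟩
    · simp at hlen
    · have ht : t.length = ℓ := by simpa using hlen
      exact ⟨a, _, ⟨t, ⟨hw, ht⟩, rfl⟩, by rw [lexRank_cons, ht]⟩
  · rintro ⟨a, _, ⟨t, ⟨ht, hlen⟩, rfl⟩, rfl⟩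
    exact ⟨a :: t, ⟨ht, by simp [hlen]⟩, by rw [lexRank_cons, hlen]⟩

lemma profile_succ_congr {K J K' J' : Language α} {m n : ℕ}
    (h : ∀ a, (K.leftQuotient [a]).profile (J.leftQuotient [a]) m =
      (K'.leftQuotient [a]).profile (J'.leftQuotient [a]) n) :
    K.profile J (m + 1) = K'.profile J' (n + 1) := by
  have hcount := fun a => congrArg Prod.fst (h a)
  have hranks := fun a => congrArg Prod.snd (h a)
  simp only [profile] at hcount hranks
  simp only [profile, uCount_succ, image_lexRank_lengthSlice_succ, hcount, hranks]

lemma exists_eventuallyPeriodic_profile {L M : Language α} (hL : L.IsRegular)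
    (hM : M.IsRegular) {d : ℕ} (hd : ∀ n, uCount L n ≤ d) :
    ∃ N P, 0 < P ∧
      ∀ u, EventuallyPeriodic ((L.leftQuotient u).profile (M.leftQuotient u)) N P := by
  set R := range fun u => (L.leftQuotient u, M.leftQuotient u)
  have hR : R.Finite := (hL.finite_range_leftQuotient.prod hM.finite_range_leftQuotient).subset
    (range_subset_iff.mpr fun u => ⟨mem_range_self u, mem_range_self u⟩)
  have hR_quot : ∀ x ∈ R, ∀ a, (x.1.leftQuotient [a], x.2.leftQuotient [a]) ∈ R := by
    rintro _ ⟨u, rfl⟩ a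
    exact ⟨u ++ [a], by simp only [leftQuotient_append]⟩
  have : Finite R := hR.to_subtype
  let f : ℕ → R → ℕ × Set ℕ := fun ℓ x => x.1.1.profile x.1.2 ℓ
  have hf_range : range f ⊆ pi univ fun _ => Iic d ×ˢ 𝒫 Iic d := by
    rintro _ ⟨ℓ, rfl⟩ ⟨_, u, rfl⟩ -
    have hcount : uCount (L.leftQuotient u) ℓ ≤ d := (L.uCount_leftQuotient_le u ℓ).trans (hd _)
    refine ⟨hcount, ?_⟩
    rintro _ ⟨w, hw, rfl⟩
    exact (((L.leftQuotient u).lexRank_le_uCount w).trans (hw.2 ▸ hcount) : _)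
  obtain ⟨N, P, hP, hf⟩ := exists_eventuallyPeriodic_of_finite_range
    ((Set.Finite.pi fun _ => (finite_Iic d).prod (finite_Iic d).finite_subsets).subset hf_range)
    fun m n h => funext fun x => profile_succ_congr fun a => congrFun h ⟨_, hR_quot x.1 x.2 a⟩
  exact ⟨N, P, hP, fun u ℓ hℓ => congrFun (hf ℓ hℓ) ⟨_, u, rfl⟩⟩

end Profile

end Language

open Language

section

variable {α : Type*} [Fintype α] [LinearOrder α] {L : Language α}

lemma SRecognizable.ultimatelyPeriodic (hL : L.IsRegular) (hinf : L.Infinite) {d : ℕ}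
    (hd : ∀ n, uCount L n ≤ d) {X : Set ℕ} (hX : SRecognizable L X) : UltimatelyPeriodic X := by
  obtain ⟨N, P, hP, hper⟩ := exists_eventuallyPeriodic_profile hL hX hd
  set M : Language α := {w | w ∈ L ∧ genIndex L w ∈ X}
  have hprof : EventuallyPeriodic (L.profile M) N P := hper []
  obtain ⟨C, hC, hV⟩ := L.exists_shorterCount_add_mul hinf hP (hprof.comp Prod.fst)
  refine ⟨L.shorterCount N, C, hC, fun n hn => ?_⟩
  obtain ⟨ℓ, k, rfl, hk⟩ := L.exists_eq_shorterCount_add hinf n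
  have hℓ : N ≤ ℓ := by
    by_contra! h
    have := L.shorterCount_mono (Nat.succ_le_of_lt h)
    rw [shorterCount_succ] at this
    omega
  have hshift : L.shorterCount ℓ + k + C = L.shorterCount (ℓ + P) + k := by
    have := hV 1 ℓ hℓ
    simp only [one_mul] at this
    omega
  have hcount : uCount L (ℓ + P) = uCount L ℓ := congrArg Prod.fst (hprof ℓ hℓ)
  have hranks : L.lexRank '' M.lengthSlice (ℓ + P) = L.lexRank '' M.lengthSlice ℓ :=
    congrArg Prod.snd (hprof ℓ hℓ)
  show (L.shorterCount ℓ + k + C ∈ X) = (L.shorterCount ℓ + k ∈ X)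
  rw [eq_iff_iff, hshift, shorterCount_add_mem_iff (hcount ▸ hk), shorterCount_add_mem_iff hk,
    hranks]

lemma UltimatelyPeriodic.sRecognizable (hL : L.IsRegular) (hinf : L.Infinite) {d : ℕ}
    (hd : ∀ n, uCount L n ≤ d) {Y : Set ℕ} (hY : UltimatelyPeriodic Y) : SRecognizable L Y := by
  obtain ⟨T, p, hp, hY⟩ := hY
  obtain ⟨N, P, hP, hper⟩ := exists_eventuallyPeriodic_profile hL hL hd
  have hcount : ∀ u, EventuallyPeriodic (uCount (L.leftQuotient u)) N P :=
    fun u => (hper u).comp Prod.fst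
  obtain ⟨C, -, hV⟩ := L.exists_shorterCount_add_mul hinf hP (by simpa using hcount [])
  obtain ⟨M, hM⟩ := L.exists_le_shorterCount hinf T
  let shift : ℕ → Set ℕ := fun h => (h + ·) ⁻¹' Y
  have hshift : EventuallyPeriodic shift T p := hY.preimage_add
  -- `genIndex L (u ++ v) = H u v.length + (L.leftQuotient u).lexRank v` by `genIndex_append`
  let H : List α → ℕ → ℕ := fun u m => L.shorterCount (u.length + m) + L.prefixRank u m
  have hH : ∀ u, EventuallyPeriodic (shift ∘ H u) (max N M) (p * P) := by
    intro u m hm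
    have hHm : T ≤ H u m :=
      hM.trans ((L.shorterCount_mono (by omega)).trans (Nat.le_add_right _ _))
    simp only [comp_apply, H]
    rw [← add_assoc, hV p _ (by omega), (eventuallyPeriodic_prefixRank hcount u).add_mul p
      (by omega), add_right_comm, mul_comm]
    exact hshift.add_mul C hHm
  apply IsRegular.of_finite_range_leftQuotient
  have hfin := hL.finite_range_leftQuotient.prod
    (finite_setOf_eventuallyPeriodic (hshift.finite_range hp) (N := max N M) (mul_pos hp hP))
  refine (hfin.image fun x => {v | v ∈ x.1 ∧ x.1.lexRank v ∈ x.2 v.length}).subset ?_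
  rintro _ ⟨u, rfl⟩
  refine ⟨(L.leftQuotient u, shift ∘ H u),
    ⟨mem_range_self u, hH u, fun m => mem_range_self _⟩, ?_⟩
  ext v
  change _ ↔ u ++ v ∈ L ∧ genIndex L (u ++ v) ∈ Y
  rw [genIndex_append]
  rfl

end

/-- For a numeration system built on a slender regular language, multiplication by any
constant preserves `S`-recognizability. -/
theorem slender_mul_SRecognizable {α : Type*} [Fintype α] [LinearOrder α]
    (L : Language α) (hreg : L.IsRegular) (hinf : L.Infinite)
    (hslender : ∃ d : ℕ, ∀ n : ℕ, uCount L n ≤ d)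
    (X : Set ℕ) (hX : SRecognizable L X) (lam : ℕ) :
    SRecognizable L {m | ∃ x ∈ X, m = lam * x} := by
  obtain ⟨d, hd⟩ := hslender
  exact ((hX.ultimatelyPeriodic hreg hinf hd).mul lam).sRecognizable hreg hinf hd
end

section
/- Let β be a positive integer and take ℓ = 2. Multiplication by β² preserves B_2-recognizability — i.e., for every X ⊆ ℕ, regularity of the language {word(rep_2(x)) : x ∈ X} implies regularity of the language {word(rep_2(β²·x)) : x ∈ X} — if and only if β is odd. -/
/-- `valB ℓ n = Σ_{i=1}^{ℓ} C(n_i + ⋯ + n_ℓ + ℓ − i, ℓ − i + 1)` (0-based indexing). -/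
def valB (ℓ : ℕ) (n : Fin ℓ → ℕ) : ℕ :=
  ∑ i : Fin ℓ,
    Nat.choose ((∑ j ∈ Finset.univ.filter (fun j => i ≤ j), n j) + (ℓ - 1 - (i : ℕ)))
      (ℓ - (i : ℕ))

/-- `repB ℓ` is the inverse of the bijection `valB ℓ`. -/
noncomputable def repB (ℓ : ℕ) : ℕ → (Fin ℓ → ℕ) := Function.invFun (valB ℓ)

/-- The word `a_1^{n_1} a_2^{n_2} ⋯ a_ℓ^{n_ℓ}` over the alphabet `Fin ℓ`. -/
def wordB (ℓ : ℕ) (n : Fin ℓ → ℕ) : List (Fin ℓ) :=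
  (List.ofFn (fun i : Fin ℓ => List.replicate (n i) i)).flatten

/-!
Through the Cantor pairing `cantor (p, q) = tri (p + q) + q`, which is `valB 2`, the word of `x` is
`0^p 1^q` where `cantor (p, q) = x`. So `X` is `B_2`-recognizable iff `cantor ⁻¹' X` is
eventually periodic in each coordinate: a DFA reading `0^p 1^q` sees `p` and `q` only through
eventually periodic orbits, and conversely two clocks suffice.

For odd `β = 2t + 1`, the identity `tri (β s + t + c) = β² tri s + c β s + c t + tri c + tri t`
splits `cantor (p, q) = β² cantor (u, v)` into branches `c < β`, on each of which `(p, q)` is an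
affine function of `(u, v)`, plus the column `p = tri t - 1` and finitely many diagonals. On each
branch, translating `(u, v)` by suitable multiples of a period `M` of `cantor ⁻¹' X` translates
`(p, q)` by `β³ M` in either coordinate, so the image is again eventually periodic.

For even `β = 2(g + 1)`, let `X` be the triangular numbers, whose language `0^*` is regular. In
the image, `p ≥ tri g` forces `p = q + g + 2 tri g`, which rules out periodicity in `p`.
-/

open Function

lemma DFA.evalFrom_replicate {α σ : Type*} (D : DFA α σ) (s : σ) (a : α) (k : ℕ) :
    D.evalFrom s (List.replicate k a) = (fun s => D.step s a)^[k] s := by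
  induction k generalizing s with
  | zero => rfl
  | succ k ih => exact ih (D.step s a)

lemma Function.iterate_card_mem_periodicPts {σ : Type*} [Fintype σ] (g : σ → σ) (x : σ) :
    g^[Fintype.card σ] x ∈ periodicPts g := by
  obtain ⟨a, b, hne, heq⟩ := Fintype.exists_ne_map_eq_of_card_lt
    (fun i : Fin (Fintype.card σ + 1) => g^[i] x) (by simp)
  wlog hab : a < b generalizing a b
  · exact this b a hne.symm heq.symm (lt_of_le_of_ne (not_lt.mp hab) hne.symm)
  have hper : IsPeriodicPt g (b - a) (g^[a] x) := by
    rw [IsPeriodicPt, IsFixedPt, ← iterate_add_apply, Nat.sub_add_cancel hab.le]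
    exact heq.symm
  have hcard : Fintype.card σ = (Fintype.card σ - a) + a := by omega
  rw [hcard, iterate_add_apply]
  exact mk_mem_periodicPts (by omega) (hper.apply_iterate _)

lemma Function.iterate_add_factorial_card {σ : Type*} [Fintype σ] (g : σ → σ) (x : σ) {m : ℕ}
    (hm : Fintype.card σ ≤ m) : g^[m + (Fintype.card σ).factorial] x = g^[m] x := by
  have hmem : g^[m] x ∈ periodicPts g := by
    rw [← Nat.sub_add_cancel hm, iterate_add_apply]
    exact (bijOn_periodicPts (f := g)).mapsTo.iterate _ (iterate_card_mem_periodicPts g x)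
  rw [add_comm, iterate_add_apply]
  exact isPeriodicPt_factorial_card_of_mem_periodicPts hmem

namespace B2

def tri (n : ℕ) : ℕ := n * (n + 1) / 2

lemma two_mul_tri (n : ℕ) : 2 * tri n = n * (n + 1) :=
  Nat.mul_div_cancel' (Nat.even_mul_succ_self n).two_dvd

lemma tri_succ (n : ℕ) : tri (n + 1) = tri n + (n + 1) := by
  linarith [two_mul_tri n, two_mul_tri (n + 1)]

lemma tri_strictMono : StrictMono tri :=
  strictMono_nat_of_lt_succ fun n => by rw [tri_succ]; omega

lemma tri_mono : Monotone tri := tri_strictMono.monotone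

lemma tri_zero : tri 0 = 0 := rfl

lemma tri_pos {n : ℕ} (hn : 0 < n) : 0 < tri n := by
  simpa [tri_zero] using tri_strictMono hn

lemma le_tri (n : ℕ) : n ≤ tri n := by
  nlinarith [two_mul_tri n]

/-- The values `tri a + b` with `b ≤ a` fill the gap `[tri a, tri (a + 1))`. -/
lemma eq_of_tri_add_eq {a b a' b' : ℕ} (hb : b ≤ a) (hb' : b' ≤ a')
    (h : tri a + b = tri a' + b') : a = a' ∧ b = b' := by
  suffices a = a' by subst this; omega
  by_contra hne
  rcases Nat.lt_or_gt_of_ne hne with hlt | hlt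
  · have := tri_mono (Nat.succ_le_of_lt hlt); rw [tri_succ] at this; omega
  · have := tri_mono (Nat.succ_le_of_lt hlt); rw [tri_succ] at this; omega

def cantor (x : ℕ × ℕ) : ℕ := tri (x.1 + x.2) + x.2

lemma cantor_injective : Injective cantor := by
  rintro ⟨p, q⟩ ⟨p', q'⟩ h
  obtain ⟨hs, rfl⟩ := eq_of_tri_add_eq (by omega) (by omega) h
  simp only [Prod.mk.injEq, and_true]
  omega

lemma cantor_surjective : Surjective cantor := by
  intro x
  induction x with
  | zero => exact ⟨(0, 0), rfl⟩
  | succ n ih =>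
    obtain ⟨⟨p, q⟩, rfl⟩ := ih
    cases p with
    | zero => exact ⟨(q + 1, 0), by simp [cantor, tri_succ]; omega⟩
    | succ p =>
      refine ⟨(p, q + 1), ?_⟩
      simp only [cantor]
      rw [show p + (q + 1) = p + 1 + q by omega]
      omega

lemma cantor_bijective : Bijective cantor := ⟨cantor_injective, cantor_surjective⟩

lemma valB_two (n : Fin 2 → ℕ) : valB 2 n = cantor (piFinTwoEquiv _ n) := by
  simp [valB, Fin.sum_univ_two, Finset.sum_filter, cantor, tri, Nat.choose_two_right, Nat.mul_comm]

def pairWord (x : ℕ × ℕ) : List (Fin 2) := List.replicate x.1 0 ++ List.replicate x.2 1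

lemma pairWord_injective : Injective pairWord := by
  rintro ⟨p, q⟩ ⟨p', q'⟩ h
  have h0 := congrArg (List.count 0) h
  have h1 := congrArg (List.count 1) h
  simp only [pairWord, List.count_append, List.count_replicate] at h0 h1
  simp_all

lemma wordB_two (n : Fin 2 → ℕ) : wordB 2 n = pairWord (piFinTwoEquiv _ n) := by
  simp [wordB, pairWord, List.ofFn_succ]

lemma wordB_repB_cantor (x : ℕ × ℕ) : wordB 2 (repB 2 (cantor x)) = pairWord x := by
  have hval : Bijective (valB 2) := by
    rw [show valB 2 = cantor ∘ piFinTwoEquiv _ from funext valB_two]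
    exact cantor_bijective.comp (Equiv.bijective _)
  have hrep : repB 2 (cantor x) = (piFinTwoEquiv _).symm x := by
    apply hval.1
    rw [repB, rightInverse_invFun hval.2, valB_two, Equiv.apply_symm_apply]
  rw [wordB_two, hrep, Equiv.apply_symm_apply]

def pairLang (S : Set (ℕ × ℕ)) : Language (Fin 2) := pairWord '' S

lemma pairWord_mem_pairLang {S : Set (ℕ × ℕ)} {x : ℕ × ℕ} : pairWord x ∈ pairLang S ↔ x ∈ S :=
  pairWord_injective.mem_set_image

lemma setOf_wordB_repB_eq (X : Set ℕ) (f : ℕ → ℕ) :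
    {w : List (Fin 2) | ∃ x ∈ X, w = wordB 2 (repB 2 (f x))} = pairLang (cantor ⁻¹' (f '' X)) := by
  ext w
  constructor
  · rintro ⟨x, hx, rfl⟩
    obtain ⟨y, hy⟩ := cantor_surjective (f x)
    exact ⟨y, ⟨x, hx, hy.symm⟩, by rw [← hy, wordB_repB_cantor]⟩
  · rintro ⟨y, ⟨x, hx, hy⟩, rfl⟩
    exact ⟨x, hx, by rw [hy, wordB_repB_cantor]⟩

def EventuallyPeriodic (S : Set (ℕ × ℕ)) (M N : ℕ) : Prop :=
  0 < M ∧ ∀ p q : ℕ,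
    (N ≤ p → ((p, q) ∈ S ↔ (p + M, q) ∈ S)) ∧ (N ≤ q → ((p, q) ∈ S ↔ (p, q + M) ∈ S))

namespace EventuallyPeriodic

variable {S : Set (ℕ × ℕ)} {M N : ℕ}

lemma add_mul_left_mem_iff (h : EventuallyPeriodic S M N) {p : ℕ} (hp : N ≤ p) (q k : ℕ) :
    (p + k * M, q) ∈ S ↔ (p, q) ∈ S := by
  induction k with
  | zero => simp
  | succ k ih => rw [add_one_mul, ← add_assoc, ← ih]; exact ((h.2 _ q).1 (by omega)).symm

lemma add_mul_right_mem_iff (h : EventuallyPeriodic S M N) (p : ℕ) {q : ℕ} (hq : N ≤ q) (k : ℕ) :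
    (p, q + k * M) ∈ S ↔ (p, q) ∈ S := by
  induction k with
  | zero => simp
  | succ k ih => rw [add_one_mul, ← add_assoc, ← ih]; exact ((h.2 p _).2 (by omega)).symm

lemma add_mul_mem_iff (h : EventuallyPeriodic S M N) {p q i j : ℕ} (hp : i ≠ 0 → N ≤ p)
    (hq : j ≠ 0 → N ≤ q) : (p + i * M, q + j * M) ∈ S ↔ (p, q) ∈ S := by
  have hleft : (p + i * M, q) ∈ S ↔ (p, q) ∈ S := by
    rcases eq_or_ne i 0 with rfl | hi
    · simp
    · exact h.add_mul_left_mem_iff (hp hi) q i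
  rcases eq_or_ne j 0 with rfl | hj
  · simpa using hleft
  · rw [h.add_mul_right_mem_iff _ (hq hj), hleft]

lemma exists_mem_iff (hS : EventuallyPeriodic S M N)
    {R : ℕ × ℕ → ℕ × ℕ → Prop} {x y : ℕ × ℕ}
    (hxy : ∀ u v, R (u, v) x →
      ∃ i j, (i ≠ 0 → N ≤ u) ∧ (j ≠ 0 → N ≤ v) ∧ R (u + i * M, v + j * M) y)
    (hyx : ∀ u v, R (u, v) y → ∃ i j u₀ v₀, u = u₀ + i * M ∧ v = v₀ + j * M ∧
      (i ≠ 0 → N ≤ u₀) ∧ (j ≠ 0 → N ≤ v₀) ∧ R (u₀, v₀) x) :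
    (∃ z ∈ S, R z x) ↔ ∃ z ∈ S, R z y := by
  constructor
  · rintro ⟨⟨u, v⟩, hz, hR⟩
    obtain ⟨i, j, hi, hj, hR'⟩ := hxy u v hR
    exact ⟨_, (hS.add_mul_mem_iff hi hj).mpr hz, hR'⟩
  · rintro ⟨⟨u, v⟩, hz, hR⟩
    obtain ⟨i, j, u₀, v₀, rfl, rfl, hi, hj, hR'⟩ := hyx u v hR
    exact ⟨_, (hS.add_mul_mem_iff hi hj).mp hz, hR'⟩

end EventuallyPeriodic

/-- The residue of `x` on a clock that counts `0, 1, …, N + M - 1` and then returns to `N`. -/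
def clock (N M x : ℕ) : ℕ := if x < N then x else N + (x - N) % M

section Clock

variable {N M : ℕ}

lemma clock_zero : clock N M 0 = 0 := by
  unfold clock; split_ifs <;> simp_all

lemma clock_lt (hM : 0 < M) (x : ℕ) : clock N M x < N + M := by
  unfold clock; split_ifs
  · omega
  · exact Nat.add_lt_add_left (Nat.mod_lt _ hM) N

lemma clock_clock_succ (x : ℕ) : clock N M (clock N M x + 1) = clock N M (x + 1) := by
  unfold clock
  by_cases hx : x < N
  · simp [hx]
  · rw [if_neg hx, if_neg (by omega), if_neg (by omega),
      show N + (x - N) % M + 1 - N = (x - N) % M + 1 by omega, Nat.mod_add_mod,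
      show x + 1 - N = x - N + 1 by omega]

lemma exists_eq_clock_add_mul (x : ℕ) :
    ∃ k, x = clock N M x + k * M ∧ (k ≠ 0 → N ≤ clock N M x) := by
  unfold clock
  split_ifs with hx
  · exact ⟨0, by simp, by simp⟩
  · exact ⟨(x - N) / M, by rw [add_assoc, Nat.mod_add_div']; omega, fun _ => by omega⟩

end Clock

lemma EventuallyPeriodic.clock_mem_iff {S : Set (ℕ × ℕ)} {M N : ℕ} (h : EventuallyPeriodic S M N)
    (p q : ℕ) : (clock N M p, clock N M q) ∈ S ↔ (p, q) ∈ S := by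
  obtain ⟨i, hpi, hi⟩ := exists_eq_clock_add_mul (N := N) (M := M) p
  obtain ⟨j, hqj, hj⟩ := exists_eq_clock_add_mul (N := N) (M := M) q
  have := h.add_mul_mem_iff hi hj
  rwa [← hpi, ← hqj, iff_comm] at this

section ClockDFA

variable (S : Set (ℕ × ℕ)) {M : ℕ} (N : ℕ) (hM : 0 < M)

def tick (i : Fin (N + M)) : Fin (N + M) := ⟨clock N M (i + 1), clock_lt hM _⟩

lemma tick_iterate_zero_val (k : ℕ) : ((tick N hM)^[k] ⟨0, by omega⟩ : ℕ) = clock N M k := by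
  induction k with
  | zero => exact clock_zero.symm
  | succ k ih =>
    rw [iterate_succ_apply']
    show clock N M (((tick N hM)^[k] ⟨0, _⟩ : ℕ) + 1) = _
    rw [ih, clock_clock_succ]

/-- Reads `0^p 1^q` by running one clock on the `0`s and another on the `1`s; the flag records
whether a `1` has been read, after which a `0` leads to the dead state `none`. -/
def clockDFA : DFA (Fin 2) (Option (Fin (N + M) × Fin (N + M) × Bool)) where
  step
    | none, _ => none
    | some (i, j, seen), a =>
      if a = 0 then (if seen then none else some (tick N hM i, j, false))
      else some (i, tick N hM j, true)
  start := some (⟨0, by omega⟩, ⟨0, by omega⟩, false)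
  accept := {s | ∃ i j seen, s = some (i, j, seen) ∧ ((i : ℕ), (j : ℕ)) ∈ S}

lemma clockDFA_eval_pairWord (p q : ℕ) :
    (clockDFA S N hM).eval (pairWord (p, q)) =
      some ((tick N hM)^[p] ⟨0, by omega⟩, (tick N hM)^[q] ⟨0, by omega⟩, decide (q ≠ 0)) := by
  induction q with
  | zero =>
    induction p with
    | zero => rfl
    | succ p ih =>
      simp only [pairWord, List.replicate_succ', List.replicate_zero, List.append_nil] at ih ⊢
      rw [DFA.eval_append_singleton, ih, iterate_succ_apply']
      rfl
  | succ q ih =>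
    simp only [pairWord, List.replicate_succ', ← List.append_assoc] at ih ⊢
    rw [DFA.eval_append_singleton, ih, iterate_succ_apply']
    rfl

lemma exists_eq_pairWord_or_clockDFA_eval_eq_none (w : List (Fin 2)) :
    (∃ x, w = pairWord x) ∨ (clockDFA S N hM).eval w = none := by
  induction w using List.reverseRecOn with
  | nil => exact Or.inl ⟨(0, 0), rfl⟩
  | append_singleton w a ih =>
    rcases ih with ⟨⟨p, q⟩, rfl⟩ | hnone
    · fin_cases a
      · rcases Nat.eq_zero_or_pos q with rfl | hq
        · exact Or.inl ⟨(p + 1, 0), by simp [pairWord, List.replicate_succ']⟩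
        · right
          rw [DFA.eval_append_singleton, clockDFA_eval_pairWord]
          simp [clockDFA, hq.ne']
      · exact Or.inl ⟨(p, q + 1), by simp [pairWord, List.replicate_succ']⟩
    · right
      rw [DFA.eval_append_singleton, hnone]
      rfl

theorem EventuallyPeriodic.isRegular_pairLang {S : Set (ℕ × ℕ)} {M N : ℕ}
    (h : EventuallyPeriodic S M N) : (pairLang S).IsRegular := by
  have hM : 0 < M := h.1
  refine ⟨_, inferInstance, clockDFA S N hM, ?_⟩
  ext w
  rw [DFA.mem_accepts]
  rcases exists_eq_pairWord_or_clockDFA_eval_eq_none S N hM w with ⟨⟨p, q⟩, rfl⟩ | hnone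
  · rw [pairWord_mem_pairLang, clockDFA_eval_pairWord, ← h.clock_mem_iff,
      ← tick_iterate_zero_val N hM, ← tick_iterate_zero_val N hM]
    exact ⟨fun ⟨_, _, _, hs, hS⟩ => by cases hs; exact hS, fun hS => ⟨_, _, _, rfl, hS⟩⟩
  · rw [hnone]
    refine ⟨fun ⟨_, _, _, hs, _⟩ => (nomatch hs), ?_⟩
    rintro ⟨x, -, rfl⟩
    rw [clockDFA_eval_pairWord] at hnone
    exact absurd hnone (Option.some_ne_none _)

end ClockDFA

theorem exists_eventuallyPeriodic_of_isRegular {S : Set (ℕ × ℕ)} (h : (pairLang S).IsRegular) :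
    ∃ M N, EventuallyPeriodic S M N := by
  obtain ⟨σ, _, D, hD⟩ := h
  have hmem (p q : ℕ) :
      (p, q) ∈ S ↔ (fun s => D.step s 1)^[q] ((fun s => D.step s 0)^[p] D.start) ∈ D.accept := by
    rw [← pairWord_mem_pairLang, ← hD, DFA.mem_accepts, DFA.eval, pairWord, DFA.evalFrom_of_append,
      DFA.evalFrom_replicate, DFA.evalFrom_replicate]
  refine ⟨(Fintype.card σ).factorial, Fintype.card σ, Nat.factorial_pos _,
    fun p q => ⟨fun hp => ?_, fun hq => ?_⟩⟩
  · rw [hmem, hmem, iterate_add_factorial_card _ _ hp]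
  · rw [hmem, hmem, iterate_add_factorial_card _ _ hq]

theorem isRegular_pairLang_iff {S : Set (ℕ × ℕ)} :
    (pairLang S).IsRegular ↔ ∃ M N, EventuallyPeriodic S M N :=
  ⟨exists_eventuallyPeriodic_of_isRegular, fun ⟨_, _, h⟩ => h.isRegular_pairLang⟩

lemma isRegular_setOf_wordB_repB_iff (X : Set ℕ) (f : ℕ → ℕ) :
    Language.IsRegular {w : List (Fin 2) | ∃ x ∈ X, w = wordB 2 (repB 2 (f x))} ↔
      ∃ M N, EventuallyPeriodic (cantor ⁻¹' (f '' X)) M N := by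
  rw [setOf_wordB_repB_eq, isRegular_pairLang_iff]

def sqMulImage (β : ℕ) (S : Set (ℕ × ℕ)) : Set (ℕ × ℕ) :=
  {x | ∃ z ∈ S, cantor x = β ^ 2 * cantor z}

lemma cantor_preimage_image_sq_mul (k : ℕ) (X : Set ℕ) :
    cantor ⁻¹' ((k ^ 2 * ·) '' X) = sqMulImage k (cantor ⁻¹' X) := by
  ext x
  constructor
  · rintro ⟨y, hy, hxy⟩
    obtain ⟨z, rfl⟩ := cantor_surjective y
    exact ⟨z, hy, hxy.symm⟩
  · rintro ⟨z, hz, hxz⟩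
    exact ⟨cantor z, hz, hxz.symm⟩

section OddSquare

variable {β t c u v p q i M N K : ℕ}

lemma tri_mul_add_add (hβ : β = 2 * t + 1) (s c : ℕ) :
    tri (β * s + t + c) = β ^ 2 * tri s + c * (β * s) + c * t + tri c + tri t := by
  subst hβ
  apply Nat.eq_of_mul_eq_mul_left two_pos
  linear_combination two_mul_tri ((2 * t + 1) * s + t + c) - (2 * t + 1) ^ 2 * two_mul_tri s
    - two_mul_tri c - two_mul_tri t

lemma tri_lt_sq (hβ : β = 2 * t + 1) : tri t < β ^ 2 := by
  subst hβ; nlinarith [two_mul_tri t]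

/-- For odd `β = 2t + 1`, `cantor (p, q) = β² · cantor (u, v)` places the diagonal `p + q` at
`β (u + v) + t + c` for some `c < β`, up to the exceptions in `branch_or_seam_of_cantor_eq`; by
`tri_mul_add_add` the equation is then equivalent to this linear system. -/
def Branch (β t c u v p q : ℕ) : Prop :=
  p + q = β * (u + v) + t + c ∧ β ^ 2 * v = q + c * (β * (u + v)) + c * t + tri c + tri t

/-- The exceptional solutions of `cantor (p, q) = β² · cantor (u, 0)` with `p + q = β u + t - 1`. -/
def Seam (β t u v p q : ℕ) : Prop :=
  v = 0 ∧ p + 1 = tri t ∧ q + tri t = β * u + t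

lemma cantor_eq_of_branch (hβ : β = 2 * t + 1) (h : Branch β t c u v p q) :
    cantor (p, q) = β ^ 2 * cantor (u, v) := by
  simp only [cantor]
  rw [h.1, tri_mul_add_add hβ, mul_add (β ^ 2), h.2]
  ring

lemma cantor_eq_of_seam (hβ : β = 2 * t + 1) (h : Seam β t u v p q) :
    cantor (p, q) = β ^ 2 * cantor (u, v) := by
  obtain ⟨rfl, hp, hq⟩ := h
  have hbase := tri_mul_add_add hβ u 0
  have hsucc := tri_succ (p + q)
  rw [show p + q + 1 = β * u + t + 0 by omega] at hsucc
  simp only [cantor, add_zero, zero_mul, tri_zero] at hbase hsucc ⊢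
  omega

lemma branch_or_seam_of_cantor_eq (hβ : β = 2 * t + 1)
    (h : cantor (p, q) = β ^ 2 * cantor (u, v)) :
    (∃ c < β, Branch β t c u v p q) ∨ Seam β t u v p q ∨ p + q < tri t := by
  have h' : tri (p + q) + q = β ^ 2 * tri (u + v) + β ^ 2 * v := by simpa [cantor, mul_add] using h
  have hbase := tri_mul_add_add hβ (u + v) 0
  simp only [add_zero, zero_mul, tri_zero] at hbase
  by_cases hv : tri t ≤ β ^ 2 * v
  · left
    have hlo : β * (u + v) + t ≤ p + q := by
      by_contra hlt
      have := tri_mono (show p + q + 1 ≤ β * (u + v) + t by omega)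
      rw [tri_succ] at this
      omega
    have hhi : p + q < β * (u + v) + t + β := by
      by_contra hge
      have hmono := tri_mono (show β * (u + v) + t + β ≤ p + q by omega)
      have hvs : β ^ 2 * v ≤ β * (β * (u + v)) := by
        rw [← mul_assoc, ← sq]; exact Nat.mul_le_mul_left _ (by omega)
      have := tri_pos (show 0 < β by omega)
      rw [tri_mul_add_add hβ] at hmono
      omega
    refine ⟨p + q - (β * (u + v) + t), by omega, by omega, ?_⟩
    have := tri_mul_add_add hβ (u + v) (p + q - (β * (u + v) + t))
    rw [show β * (u + v) + t + (p + q - (β * (u + v) + t)) = p + q by omega] at this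
    omega
  · right
    obtain rfl : v = 0 := by
      by_contra hv0
      have := tri_lt_sq hβ
      have := Nat.le_mul_of_pos_right (β ^ 2) (Nat.pos_of_ne_zero hv0)
      omega
    simp only [add_zero, mul_zero] at h' hbase
    have hlt : p + q < β * u + t := by
      by_contra hge
      have := tri_mono (show β * u + t ≤ p + q by omega)
      omega
    rcases (show p + q + 1 = β * u + t ∨ p + q + 2 ≤ β * u + t by omega) with hd | hd
    · have := tri_succ (p + q)
      rw [hd] at this
      exact Or.inl ⟨rfl, by omega, by omega⟩
    · have := tri_mono hd
      rw [tri_succ, tri_succ] at this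
      exact Or.inr (by omega)

lemma branch_add_left_iff (hij : i + c * β = β ^ 2) :
    Branch β t c (u + i * M) (v + c * β * M) (p + β ^ 3 * M) q ↔ Branch β t c u v p q := by
  have hs : β * (u + i * M + (v + c * β * M)) = β * (u + v) + β ^ 3 * M := by
    linear_combination β * M * hij
  simp only [Branch, hs]
  constructor
  · rintro ⟨h1, h2⟩; exact ⟨by linear_combination h1, by linear_combination h2⟩
  · rintro ⟨h1, h2⟩; exact ⟨by linear_combination h1, by linear_combination h2⟩

lemma branch_add_right_iff (hij : i + (c + 1) * β = β ^ 2) :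
    Branch β t c (u + i * M) (v + (c + 1) * β * M) p (q + β ^ 3 * M) ↔ Branch β t c u v p q := by
  have hs : β * (u + i * M + (v + (c + 1) * β * M)) = β * (u + v) + β ^ 3 * M := by
    linear_combination β * M * hij
  simp only [Branch, hs]
  constructor
  · rintro ⟨h1, h2⟩; exact ⟨by linear_combination h1, by linear_combination h2⟩
  · rintro ⟨h1, h2⟩; exact ⟨by linear_combination h1, by linear_combination h2⟩

lemma seam_add_iff : Seam β t (u + β ^ 2 * M) v p (q + β ^ 3 * M) ↔ Seam β t u v p q := by
  simp only [Seam]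
  constructor
  · rintro ⟨hv, hp, hq⟩; exact ⟨hv, hp, by linear_combination hq⟩
  · rintro ⟨hv, hp, hq⟩; exact ⟨hv, hp, by linear_combination hq⟩

/-- A bound for the constant terms `t + c + c t + tri c + tri t` of all branches `c < β`. -/
def branchBound (β t : ℕ) : ℕ := t + β + β * t + tri β + tri t

lemma Branch.add_mul_eq {d : ℕ} (h : Branch β t c u v p q) (hd : c + 1 + d = β) :
    p + β * d * v = β * (c + 1) * u + (t + c + c * t + tri c + tri t) := by
  linear_combination h.1 + h.2 + β * v * hd

lemma Branch.left_le (h : Branch β t c u v p q) (hc : c < β) :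
    p ≤ β * β * u + branchBound β t := by
  have := h.add_mul_eq (show c + 1 + (β - (c + 1)) = β by omega)
  have := tri_mono hc.le
  have := Nat.mul_le_mul_right t hc.le
  have := Nat.mul_le_mul_right u (Nat.mul_le_mul_left β (show c + 1 ≤ β by omega))
  unfold branchBound
  omega

lemma Branch.mul_right_le (h : Branch β t c u v p q) (hc : c + 1 < β) :
    β * v ≤ β * β * u + branchBound β t := by
  have := h.add_mul_eq (show c + 1 + (β - (c + 1)) = β by omega)
  have := tri_mono (show c ≤ β by omega)
  have := Nat.mul_le_mul_right t (show c ≤ β by omega)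
  have := Nat.mul_le_mul_right u (Nat.mul_le_mul_left β (show c + 1 ≤ β by omega))
  have := Nat.mul_le_mul_right v (Nat.le_mul_of_pos_right β (show 0 < β - (c + 1) by omega))
  unfold branchBound
  omega

lemma Branch.right_le (h : Branch β t c u v p q) : q ≤ β ^ 2 * v := by
  have := h.2
  omega

lemma Branch.mul_left_le (h : Branch β t c u v p q) (hc : c ≠ 0) : β * u ≤ β ^ 2 * v := by
  have := Nat.le_mul_of_pos_left (β * (u + v)) (Nat.pos_of_ne_zero hc)
  have := Nat.mul_le_mul_left β (Nat.le_add_right u v)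
  have := h.2
  omega

lemma Branch.bounds_of_left (h : Branch β t c u v p q) (hc : c < β)
    (hp : β ^ 3 * (K + branchBound β t) ≤ p) : K ≤ u ∧ (c ≠ 0 → K ≤ v) := by
  have hβ : 0 < β := by omega
  have hB := Nat.le_mul_of_pos_left (branchBound β t) (pow_pos hβ 3)
  have hu : β * K ≤ u := by
    have : β * β * (β * K) ≤ β * β * u := by linarith [h.left_le hc]
    exact le_of_mul_le_mul_left this (by positivity)
  refine ⟨(Nat.le_mul_of_pos_left K hβ).trans hu, fun hc0 => ?_⟩
  have := Nat.mul_le_mul_left β hu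
  have : β * β * K ≤ β * β * v := by linarith [h.mul_left_le hc0]
  exact le_of_mul_le_mul_left this (by positivity)

lemma Branch.bounds_of_right (h : Branch β t c u v p q) (hc : c < β)
    (hq : β ^ 3 * (K + branchBound β t) ≤ q) : K ≤ v ∧ (c + 1 < β → K ≤ u) := by
  have hβ : 0 < β := by omega
  have hB := Nat.le_mul_of_pos_left (branchBound β t) (pow_pos hβ 2)
  have hv : β * (K + branchBound β t) ≤ v := by
    have : β * β * (β * (K + branchBound β t)) ≤ β * β * v := by linarith [h.right_le]
    exact le_of_mul_le_mul_left this (by positivity)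
  refine ⟨le_trans (by nlinarith) hv, fun hc1 => ?_⟩
  have := Nat.mul_le_mul_left β hv
  have : β * β * K ≤ β * β * u := by linarith [h.mul_right_le hc1]
  exact le_of_mul_le_mul_left this (by positivity)

lemma Seam.bound_of_right (h : Seam β t u v p q) (hβ : 0 < β)
    (hq : β ^ 3 * (K + branchBound β t) ≤ q) : K ≤ u := by
  have := le_tri t
  have := Nat.zero_le (β ^ 3 * branchBound β t)
  have hu : β * (β * β * K) ≤ β * u := by linarith [h.2.2]
  exact le_trans (Nat.le_mul_of_pos_left K (by positivity)) (le_of_mul_le_mul_left hu hβ)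

lemma tri_le_threshold (hβ : 0 < β) (K : ℕ) : tri t ≤ β ^ 3 * (K + branchBound β t) := by
  have := Nat.le_mul_of_pos_left (K + branchBound β t) (pow_pos hβ 3)
  unfold branchBound at this ⊢
  omega

lemma exists_branch_of_left (hβ : β = 2 * t + 1) {K : ℕ} (hp : β ^ 3 * (K + branchBound β t) ≤ p)
    (h : cantor (p, q) = β ^ 2 * cantor (u, v)) :
    ∃ c < β, Branch β t c u v p q ∧ K ≤ u ∧ (c ≠ 0 → K ≤ v) := by
  have := tri_le_threshold (t := t) (show 0 < β by omega) K
  rcases branch_or_seam_of_cantor_eq hβ h with ⟨c, hc, hb⟩ | ⟨-, hs, -⟩ | hsmall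
  · exact ⟨c, hc, hb, hb.bounds_of_left hc hp⟩
  · omega
  · omega

lemma branch_or_seam_of_right (hβ : β = 2 * t + 1) {K : ℕ}
    (hq : β ^ 3 * (K + branchBound β t) ≤ q) (h : cantor (p, q) = β ^ 2 * cantor (u, v)) :
    (∃ c < β, Branch β t c u v p q ∧ K ≤ v ∧ (c + 1 < β → K ≤ u)) ∨
      (Seam β t u v p q ∧ K ≤ u) := by
  have := tri_le_threshold (t := t) (show 0 < β by omega) K
  rcases branch_or_seam_of_cantor_eq hβ h with ⟨c, hc, hb⟩ | hs | hsmall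
  · exact Or.inl ⟨c, hc, hb, hb.bounds_of_right hc hq⟩
  · exact Or.inr ⟨hs, hs.bound_of_right (by omega) hq⟩
  · omega

/-- Above the threshold every preimage `(u, v)` lies on a branch `c` with `u ≥ N + β² M`, and
`v ≥ N + β² M` unless `c = 0`; translating it by `((β - c) β M, c β M)`, which keeps it in the
periodic range of `S`, translates `(p, q)` by `(β³ M, 0)`. -/
lemma sqMulImage_add_left_iff (hβ : β = 2 * t + 1) {S : Set (ℕ × ℕ)}
    (hS : EventuallyPeriodic S M N) (hp : β ^ 3 * (N + β ^ 2 * M + branchBound β t) ≤ p) :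
    (p, q) ∈ sqMulImage β S ↔ (p + β ^ 3 * M, q) ∈ sqMulImage β S := by
  have hij {c : ℕ} (hc : c < β) : (β - c) * β + c * β = β ^ 2 := by
    rw [← add_mul, Nat.sub_add_cancel hc.le, sq]
  refine hS.exists_mem_iff (R := fun z x => cantor x = β ^ 2 * cantor z)
    (fun u v h => ?_) (fun u v h => ?_)
  · obtain ⟨c, hc, hb, hu, hv⟩ := exists_branch_of_left hβ hp h
    refine ⟨(β - c) * β, c * β, fun _ => by omega, fun hj => ?_, ?_⟩
    · exact le_trans (by omega) (hv (left_ne_zero_of_mul hj))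
    · exact cantor_eq_of_branch hβ ((branch_add_left_iff (hij hc)).mpr hb)
  · obtain ⟨c, hc, hb, hu, hv⟩ := exists_branch_of_left hβ (hp.trans (Nat.le_add_right _ _)) h
    have hshift : (β - c) * β * M + c * β * M = β ^ 2 * M := by rw [← add_mul, hij hc]
    have hvc : c * β * M ≤ v := by
      rcases eq_or_ne c 0 with rfl | hc0
      · simp
      · have := hv hc0; omega
    refine ⟨(β - c) * β, c * β, u - (β - c) * β * M, v - c * β * M, by omega, by omega,
      fun _ => by omega, fun hj => ?_, ?_⟩
    · have := hv (left_ne_zero_of_mul hj); omega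
    · refine cantor_eq_of_branch hβ ((branch_add_left_iff (M := M) (hij hc)).mp ?_)
      rwa [Nat.sub_add_cancel (by omega), Nat.sub_add_cancel hvc]

lemma sqMulImage_add_right_iff (hβ : β = 2 * t + 1) {S : Set (ℕ × ℕ)}
    (hS : EventuallyPeriodic S M N) (hq : β ^ 3 * (N + β ^ 2 * M + branchBound β t) ≤ q) :
    (p, q) ∈ sqMulImage β S ↔ (p, q + β ^ 3 * M) ∈ sqMulImage β S := by
  have hij {c : ℕ} (hc : c < β) : (β - (c + 1)) * β + (c + 1) * β = β ^ 2 := by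
    rw [← add_mul, Nat.sub_add_cancel hc, sq]
  refine hS.exists_mem_iff (R := fun z x => cantor x = β ^ 2 * cantor z)
    (fun u v h => ?_) (fun u v h => ?_)
  · rcases branch_or_seam_of_right hβ hq h with ⟨c, hc, hb, hv, hu⟩ | ⟨hs, hu⟩
    · refine ⟨(β - (c + 1)) * β, (c + 1) * β, fun hi => ?_, fun _ => by omega, ?_⟩
      · exact le_trans (by omega) (hu (Nat.sub_ne_zero_iff_lt.mp (left_ne_zero_of_mul hi)))
      · exact cantor_eq_of_branch hβ ((branch_add_right_iff (hij hc)).mpr hb)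
    · refine ⟨β ^ 2, 0, fun _ => by omega, fun h0 => (h0 rfl).elim, ?_⟩
      rw [zero_mul, add_zero]
      exact cantor_eq_of_seam hβ (seam_add_iff.mpr hs)
  · rcases branch_or_seam_of_right hβ (hq.trans (Nat.le_add_right _ _)) h with
      ⟨c, hc, hb, hv, hu⟩ | ⟨hs, hu⟩
    · have hshift : (β - (c + 1)) * β * M + (c + 1) * β * M = β ^ 2 * M := by
        rw [← add_mul, hij hc]
      have hiu : (β - (c + 1)) * β * M ≤ u := by
        rcases (show c + 1 = β ∨ c + 1 < β by omega) with hc1 | hc1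
        · simp [hc1]
        · have := hu hc1; omega
      refine ⟨(β - (c + 1)) * β, (c + 1) * β, u - (β - (c + 1)) * β * M, v - (c + 1) * β * M,
        by omega, by omega, fun hi => ?_, fun _ => by omega, ?_⟩
      · have := hu (Nat.sub_ne_zero_iff_lt.mp (left_ne_zero_of_mul hi)); omega
      · refine cantor_eq_of_branch hβ ((branch_add_right_iff (M := M) (hij hc)).mp ?_)
        rwa [Nat.sub_add_cancel hiu, Nat.sub_add_cancel (by omega)]
    · refine ⟨β ^ 2, 0, u - β ^ 2 * M, v, by omega, by simp, fun _ => by omega,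
        fun h0 => (h0 rfl).elim, ?_⟩
      refine cantor_eq_of_seam hβ ((seam_add_iff (M := M)).mp ?_)
      rwa [Nat.sub_add_cancel (by omega)]

theorem EventuallyPeriodic.sqMulImage (hβ : β = 2 * t + 1) {S : Set (ℕ × ℕ)}
    (hS : EventuallyPeriodic S M N) :
    EventuallyPeriodic (sqMulImage β S) (β ^ 3 * M) (β ^ 3 * (N + β ^ 2 * M + branchBound β t)) :=
  ⟨Nat.mul_pos (pow_pos (by omega) 3) hS.1, fun _ _ =>
    ⟨sqMulImage_add_left_iff hβ hS, sqMulImage_add_right_iff hβ hS⟩⟩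

end OddSquare

theorem isRegular_sqMul_of_odd {β : ℕ} (hβ : Odd β) (X : Set ℕ)
    (hX : Language.IsRegular {w : List (Fin 2) | ∃ x ∈ X, w = wordB 2 (repB 2 x)}) :
    Language.IsRegular {w : List (Fin 2) | ∃ x ∈ X, w = wordB 2 (repB 2 (β ^ 2 * x))} := by
  obtain ⟨t, hβ⟩ := hβ
  obtain ⟨M, N, hS⟩ := (isRegular_setOf_wordB_repB_iff X id).mp hX
  rw [Set.image_id] at hS
  have hS' := hS.sqMulImage hβ
  rw [← cantor_preimage_image_sq_mul] at hS'
  exact (isRegular_setOf_wordB_repB_iff X (β ^ 2 * ·)).mpr ⟨_, _, hS'⟩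

lemma cantor_preimage_range_tri : cantor ⁻¹' Set.range tri = {x | x.2 = 0} := by
  ext ⟨p, q⟩
  constructor
  · rintro ⟨s, hs⟩
    exact (eq_of_tri_add_eq (b := 0) (Nat.zero_le s) (Nat.le_add_left q p) hs).2.symm
  · rintro (rfl : q = 0)
    exact ⟨p, rfl⟩

lemma eventuallyPeriodic_snd_eq_zero : EventuallyPeriodic {x : ℕ × ℕ | x.2 = 0} 1 1 :=
  ⟨one_pos, fun _ _ => ⟨fun _ => Iff.rfl, fun hq => by simp only [Set.mem_ofPred_eq]; omega⟩⟩

lemma isRegular_range_tri :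
    Language.IsRegular {w : List (Fin 2) | ∃ x ∈ Set.range tri, w = wordB 2 (repB 2 x)} :=
  (isRegular_setOf_wordB_repB_iff _ id).mpr
    ⟨1, 1, by rw [Set.image_id, cantor_preimage_range_tri]; exact eventuallyPeriodic_snd_eq_zero⟩

section EvenSquare

variable {g p q : ℕ}

lemma tri_two_mul_add (g s : ℕ) :
    tri (2 * ((g + 1) * s) + g) + (g + 1) * s = (2 * (g + 1)) ^ 2 * tri s + tri g := by
  apply Nat.eq_of_mul_eq_mul_left two_pos
  linear_combination two_mul_tri (2 * ((g + 1) * s) + g) - (2 * (g + 1)) ^ 2 * two_mul_tri s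
    - two_mul_tri g

lemma mem_sqMulImage_even {s : ℕ} (hs : tri g ≤ (g + 1) * s) :
    ((g + 1) * s + g + tri g, (g + 1) * s - tri g) ∈ sqMulImage (2 * (g + 1)) {x | x.2 = 0} := by
  refine ⟨(s, 0), rfl, ?_⟩
  have := tri_two_mul_add g s
  simp only [cantor, add_zero]
  rw [show (g + 1) * s + g + tri g + ((g + 1) * s - tri g) = 2 * ((g + 1) * s) + g by omega]
  omega

lemma fst_eq_of_mem_sqMulImage_even (h : (p, q) ∈ sqMulImage (2 * (g + 1)) {x | x.2 = 0})
    (hp : tri g ≤ p) : p = q + g + 2 * tri g := by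
  obtain ⟨⟨s, _⟩, rfl, hpq⟩ := h
  have := tri_two_mul_add g s
  simp only [cantor, add_zero] at hpq
  have := eq_of_tri_add_eq (a := p + q) (b := q + tri g) (a' := 2 * ((g + 1) * s) + g)
    (b' := (g + 1) * s) (by omega) (by omega) (by omega)
  omega

theorem not_eventuallyPeriodic_sqMulImage_even (g M N : ℕ) :
    ¬ EventuallyPeriodic (sqMulImage (2 * (g + 1)) {x | x.2 = 0}) M N := by
  intro h
  have hs : N + tri g ≤ (g + 1) * (N + tri g) := Nat.le_mul_of_pos_left _ (Nat.succ_pos g)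
  have hmem := mem_sqMulImage_even (g := g) (s := N + tri g) (by omega)
  have hshift := ((h.2 _ _).1 (by omega)).mp hmem
  have := fst_eq_of_mem_sqMulImage_even hmem (by omega)
  have := fst_eq_of_mem_sqMulImage_even hshift (by omega)
  have := h.1
  omega

theorem not_isRegular_sqMul_range_tri (g : ℕ) :
    ¬ Language.IsRegular {w : List (Fin 2) | ∃ x ∈ Set.range tri,
      w = wordB 2 (repB 2 ((2 * (g + 1)) ^ 2 * x))} := by
  rw [isRegular_setOf_wordB_repB_iff _ ((2 * (g + 1)) ^ 2 * ·), cantor_preimage_image_sq_mul,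
    cantor_preimage_range_tri]
  rintro ⟨M, N, h⟩
  exact not_eventuallyPeriodic_sqMulImage_even g M N h

end EvenSquare

end B2

/-- Multiplication by `β²` preserves `B_2`-recognizability iff `β` is odd. -/
theorem mul_sq_preserves_B2_recognizability_iff (β : ℕ) (hβ : 1 ≤ β) :
    (∀ X : Set ℕ,
        Language.IsRegular {w : List (Fin 2) | ∃ x ∈ X, w = wordB 2 (repB 2 x)} →
        Language.IsRegular {w : List (Fin 2) | ∃ x ∈ X, w = wordB 2 (repB 2 (β ^ 2 * x))}) ↔
      Odd β := by
  refine ⟨fun h => ?_, fun hodd X => B2.isRegular_sqMul_of_odd hodd X⟩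
  by_contra hodd
  obtain ⟨g, rfl⟩ : ∃ g, β = 2 * (g + 1) := by
    obtain ⟨k, hk⟩ := Nat.not_odd_iff_even.mp hodd
    exact ⟨k - 1, by omega⟩
  exact B2.not_isRegular_sqMul_range_tri g (h _ B2.isRegular_range_tri)
end

section
/- For every integer ℓ ≥ 1 and every n = (n_1,…,n_ℓ) ∈ ℕ^ℓ, the set of tuples m ∈ ℕ^ℓ that are genealogically smaller than n is finite, and its cardinality equals Σ_{i=1}^{ℓ} C(n_i + n_{i+1} + ⋯ + n_ℓ + ℓ − i, ℓ − i + 1). In other words, val_ℓ(n) is the position (counting from 0) of the word word(n) in the genealogically ordered bounded language B_ℓ. -/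
/-- The genealogical (shortlex) order on `ℕ^ℓ`, i.e. the genealogical order of the
corresponding words `a_1^{m_1} ⋯ a_ℓ^{m_ℓ}` of the bounded language `B_ℓ`:
`m < n` iff the length of the word of `m` is smaller, or the lengths agree and at the
first differing coordinate `i` one has `m_i > n_i`. -/
def GenLt (ℓ : ℕ) (m n : Fin ℓ → ℕ) : Prop :=
  (∑ i, m i) < (∑ i, n i) ∨
    ((∑ i, m i) = (∑ i, n i) ∧ ∃ i : Fin ℓ, n i < m i ∧ ∀ j : Fin ℓ, j < i → m j = n j)

/-! Tuples of the same length as `n` that precede it split by their first coordinate `a`: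
either `a > n₀`, and the tail is an arbitrary tuple of smaller total than the tail of `n`
(`a` absorbs the difference), or `a = n₀` and the tail precedes the tail of `n` among tuples of
the same length. Unfolding this recursion, the predecessors of `n` are counted by
`Σ_i #{m ∈ ℕ^{ℓ-i} | Σ m < n_i + ⋯ + n_{ℓ-1}}`, and stars and bars,
`#{m ∈ ℕ^{k+1} | Σ m < N} = C(N + k, k + 1)`, turns each term into the corresponding term of
`valB`. Counting with `encard`, which is additive on disjoint unions with no finiteness side
conditions, finiteness comes out at the end from the count being a natural number. -/

theorem encard_setOf_fin_cons {α : Type*} {k : ℕ} (P : (Fin (k + 1) → α) → Prop) :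
    {p : α × (Fin k → α) | P (Fin.cons p.1 p.2)}.encard = {m | P m}.encard :=
  Set.encard_preimage_of_injective_subset_range (Fin.consEquiv fun _ => α).injective
    fun m _ => (Fin.consEquiv fun _ => α).surjective m

theorem encard_setOf_sum_lt_succ_succ (k N : ℕ) :
    {m : Fin (k + 1) → ℕ | ∑ i, m i < N + 1}.encard =
      {m : Fin k → ℕ | ∑ i, m i < N + 1}.encard +
        {m : Fin (k + 1) → ℕ | ∑ i, m i < N}.encard := by
  simp only [← encard_setOf_fin_cons fun m : Fin (k + 1) → ℕ => ∑ i, m i < _, Fin.sum_cons]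
  have hsplit : {p : ℕ × (Fin k → ℕ) | p.1 + ∑ i, p.2 i < N + 1} =
      (fun m => (0, m)) '' {m : Fin k → ℕ | ∑ i, m i < N + 1} ∪
        Prod.map Nat.succ id '' {p : ℕ × (Fin k → ℕ) | p.1 + ∑ i, p.2 i < N} := by
    ext ⟨a, m⟩
    rcases a with _ | a
    · simp
    · simp [Nat.add_right_comm a 1]
  rw [hsplit, Set.encard_union_eq, (Prod.mk_right_injective 0).encard_image,
    (Nat.succ_injective.prodMap Function.injective_id).encard_image]
  rw [Set.disjoint_left]
  rintro _ ⟨m, -, rfl⟩ ⟨⟨a, m'⟩, -, h⟩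
  simp at h

theorem encard_setOf_sum_lt (k N : ℕ) :
    {m : Fin (k + 1) → ℕ | ∑ i, m i < N}.encard = (N + k).choose (k + 1) := by
  induction N generalizing k with
  | zero => simp
  | succ N ihN =>
    induction k with
    | zero =>
      rw [encard_setOf_sum_lt_succ_succ, ihN]
      simp [add_comm]
    | succ k ihk =>
      rw [encard_setOf_sum_lt_succ_succ, ihk, ihN]
      norm_cast
      rw [show N + 1 + (k + 1) = N + k + 1 + 1 by omega, Nat.choose_succ_succ, add_right_comm N 1 k,
        ← add_assoc]

def sameLengthBelow {ℓ : ℕ} (n : Fin ℓ → ℕ) : Set (Fin ℓ → ℕ) :=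
  {m | ∑ i, m i = ∑ i, n i ∧ ∃ i, n i < m i ∧ ∀ j < i, m j = n j}

theorem encard_sameLengthBelow_cons {ℓ : ℕ} (b : ℕ) (n : Fin ℓ → ℕ) :
    (sameLengthBelow (Fin.cons b n : Fin (ℓ + 1) → ℕ)).encard =
      {m : Fin ℓ → ℕ | ∑ i, m i < ∑ i, n i}.encard + (sameLengthBelow n).encard := by
  set shorter := {m : Fin ℓ → ℕ | ∑ i, m i < ∑ i, n i}
  have hlift : Function.Injective fun m : Fin ℓ → ℕ => (b + ∑ i, n i - ∑ i, m i, m) :=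
    fun _ _ h => congrArg Prod.snd h
  rw [sameLengthBelow, ← encard_setOf_fin_cons, ← hlift.encard_image shorter,
    ← (Prod.mk_right_injective b).encard_image (sameLengthBelow n), ← Set.encard_union_eq]
  · congr 1
    ext ⟨a, m⟩
    simp only [shorter, sameLengthBelow, Set.mem_ofPred_eq, Set.mem_union, Set.mem_image,
      Prod.mk.injEq, exists_eq_right_right, Fin.sum_cons, Fin.cons_zero, Fin.cons_succ,
      Fin.exists_fin_succ, Fin.forall_fin_succ, Fin.succ_pos, Fin.succ_lt_succ_iff,
      lt_self_iff_false, not_lt_zero, IsEmpty.forall_iff, implies_true, forall_const, and_self,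
      and_true]
    constructor
    · rintro ⟨hsum, hb | ⟨i, hi, rfl, hpre⟩⟩
      · exact Or.inl ⟨by omega, by omega⟩
      · exact Or.inr ⟨⟨by omega, i, hi, hpre⟩, rfl⟩
    · rintro (⟨hlt, rfl⟩ | ⟨⟨hsum, i, hi, hpre⟩, rfl⟩)
      · exact ⟨by omega, Or.inl (by omega)⟩
      · exact ⟨by omega, Or.inr ⟨i, hi, rfl, hpre⟩⟩
  · rw [Set.disjoint_left]
    rintro _ ⟨m, hm, rfl⟩ ⟨m', -, h⟩
    simp only [shorter, Set.mem_ofPred_eq, Prod.mk.injEq] at h hm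
    omega

theorem valB_cons {ℓ : ℕ} (b : ℕ) (n : Fin ℓ → ℕ) :
    valB (ℓ + 1) (Fin.cons b n) = (b + ∑ i, n i + ℓ).choose (ℓ + 1) + valB ℓ n := by
  simp [valB, Fin.sum_univ_succ, Finset.sum_filter, Fin.succ_le_succ_iff, Nat.sub_sub,
    Nat.add_comm 1]

theorem encard_setOf_sum_lt_add_encard_sameLengthBelow {ℓ : ℕ} (n : Fin ℓ → ℕ) :
    {m : Fin ℓ → ℕ | ∑ i, m i < ∑ i, n i}.encard + (sameLengthBelow n).encard =
      valB ℓ n := by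
  induction ℓ with
  | zero => simp [sameLengthBelow, valB]
  | succ ℓ ih =>
    induction n using Fin.consCases with
    | cons b n =>
      rw [encard_sameLengthBelow_cons, ih, Fin.sum_cons, encard_setOf_sum_lt, valB_cons]
      push_cast
      ring

theorem genLt_finite_card_general (ℓ : ℕ) (n : Fin ℓ → ℕ) :
    {m : Fin ℓ → ℕ | GenLt ℓ m n}.Finite ∧
      {m : Fin ℓ → ℕ | GenLt ℓ m n}.ncard = valB ℓ n := by
  have hdisj : Disjoint {m : Fin ℓ → ℕ | ∑ i, m i < ∑ i, n i} (sameLengthBelow n) :=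
    Set.disjoint_left.2 fun _ hlt hsame => hlt.ne hsame.1
  have hcard : {m : Fin ℓ → ℕ | GenLt ℓ m n}.encard = valB ℓ n := by
    rw [← encard_setOf_sum_lt_add_encard_sameLengthBelow, ← Set.encard_union_eq hdisj]
    rfl
  have hfin := Set.finite_of_encard_eq_coe hcard
  exact ⟨hfin, by exact_mod_cast hfin.cast_ncard_eq.trans hcard⟩

/-- The set of tuples genealogically smaller than `n` is finite, of cardinality
`valB ℓ n`; i.e. `valB ℓ n` is the position of the word of `n` in the genealogically
ordered bounded language `B_ℓ`. -/
theorem genLt_finite_card (ℓ : ℕ) (hℓ : 1 ≤ ℓ) (n : Fin ℓ → ℕ) :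
    {m : Fin ℓ → ℕ | GenLt ℓ m n}.Finite ∧
      {m : Fin ℓ → ℕ | GenLt ℓ m n}.ncard = valB ℓ n :=
  genLt_finite_card_general ℓ n
end

section
/- For every integer ℓ ≥ 1 and all n, k ∈ ℕ, the coordinate sum of rep_ℓ(n) equals k (i.e., the B_ℓ-representation of n is a word of length k) if and only if C(k+ℓ−1, ℓ) ≤ n ≤ Σ_{i=1}^{ℓ} C(k+i−1, i). -/
/-!
Peeling off the first summand gives `valB (ℓ+1) m = C(s+ℓ, ℓ+1) + valB ℓ m'` with `s = ∑ m` and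
`m'` the tail of `m`, and inductively `valB ℓ m' < C(s+ℓ, ℓ)`. By Pascal's rule `valB (ℓ+1) m`
therefore lies in `[C(s+ℓ, ℓ+1), C(s+ℓ+1, ℓ+1))`; these intervals partition `ℕ`, and the
hockey-stick identity writes the right end as `1 + Σ_{i ≤ ℓ} C(s+i, i+1)`. Choosing the interval
containing `n` and recursing on the remainder shows that `valB (ℓ+1)` is surjective, so
`valB (repB n) = n` and the length of `repB n` is the index of the interval containing `n`.
-/

theorem exists_le_lt_succ_of_le_of_lt {α : Type*} [LinearOrder α] {f : ℕ → α} {a : α} {k : ℕ}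
    (h₀ : f 0 ≤ a) (hk : a < f (k + 1)) : ∃ j ≤ k, f j ≤ a ∧ a < f (j + 1) := by
  induction k with
  | zero => exact ⟨0, le_rfl, h₀, hk⟩
  | succ k ih =>
    by_cases h : a < f (k + 1)
    · obtain ⟨j, hj, hfj⟩ := ih h
      exact ⟨j, hj.trans k.le_succ, hfj⟩
    · exact ⟨k + 1, le_rfl, not_lt.1 h, hk⟩

theorem Monotone.eq_of_mem_Ico_succ {α : Type*} [Preorder α] {f : ℕ → α} (hf : Monotone f)
    {a : α} {i j : ℕ} (hi : f i ≤ a ∧ a < f (i + 1)) (hj : f j ≤ a ∧ a < f (j + 1)) : i = j := by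
  by_contra hne
  rcases Nat.lt_or_gt_of_ne hne with h | h
  · exact lt_irrefl a (hi.2.trans_le ((hf h).trans hj.1))
  · exact lt_irrefl a (hj.2.trans_le ((hf h).trans hi.1))

theorem sum_range_choose_add_succ_add_one (ℓ k : ℕ) :
    ∑ i ∈ Finset.range ℓ, (k + i).choose (i + 1) + 1 = (k + ℓ).choose ℓ := by
  induction ℓ with
  | zero => simp
  | succ ℓ ih =>
    rw [Finset.sum_range_succ, add_right_comm, ih, ← add_assoc, Nat.choose_succ_succ', add_comm]

theorem valB_zero (m : Fin 0 → ℕ) : valB 0 m = 0 := rfl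

theorem valB_succ (ℓ : ℕ) (m : Fin (ℓ + 1) → ℕ) :
    valB (ℓ + 1) m = ((∑ i, m i) + ℓ).choose (ℓ + 1) + valB ℓ (fun j => m j.succ) := by
  unfold valB
  rw [Fin.sum_univ_succ]
  congr 1
  · simp
  · refine Finset.sum_congr rfl fun i _ => ?_
    have htail : ∑ j ∈ Finset.univ.filter (fun j : Fin (ℓ + 1) => i.succ ≤ j), m j
        = ∑ j ∈ Finset.univ.filter (fun j : Fin ℓ => i ≤ j), m j.succ := by
      simp only [Finset.sum_filter, Fin.sum_univ_succ, Fin.succ_le_succ_iff,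
        Fin.succ_ne_zero, Fin.le_zero_iff, if_false, zero_add]
    rw [htail]
    congr 1 <;> simp only [Fin.val_succ] <;> omega

theorem valB_lt_choose (ℓ : ℕ) (m : Fin ℓ → ℕ) : valB ℓ m < ((∑ i, m i) + ℓ).choose ℓ := by
  induction ℓ with
  | zero => simp [valB_zero]
  | succ ℓ ih =>
    have htail_le : ∑ j : Fin ℓ, m j.succ ≤ ∑ i, m i := by
      rw [Fin.sum_univ_succ]; exact Nat.le_add_left _ _
    have htail := (ih fun j => m j.succ).trans_le
      (Nat.choose_le_choose ℓ (Nat.add_le_add_right htail_le ℓ))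
    rw [valB_succ, ← add_assoc, Nat.choose_succ_succ']
    omega

theorem choose_le_valB_succ (ℓ : ℕ) (m : Fin (ℓ + 1) → ℕ) :
    ((∑ i, m i) + ℓ).choose (ℓ + 1) ≤ valB (ℓ + 1) m :=
  (valB_succ ℓ m).symm ▸ Nat.le_add_right _ _

theorem exists_valB_eq_of_lt_choose (ℓ k n : ℕ) (hn : n < (k + ℓ).choose ℓ) :
    ∃ m : Fin ℓ → ℕ, ∑ i, m i ≤ k ∧ valB ℓ m = n := by
  induction ℓ generalizing k n with
  | zero => exact ⟨Fin.elim0, by simp, by simp_all [valB_zero]⟩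
  | succ ℓ ih =>
    obtain ⟨j, hjk, hjn, hnj⟩ := exists_le_lt_succ_of_le_of_lt
      (f := fun j => (j + ℓ).choose (ℓ + 1)) (a := n) (k := k)
      (by simp) (by rwa [show k + 1 + ℓ = k + (ℓ + 1) by omega])
    have hrest : n - (j + ℓ).choose (ℓ + 1) < (j + ℓ).choose ℓ := by
      rw [add_right_comm, Nat.choose_succ_succ'] at hnj
      omega
    obtain ⟨m, hm, hvalm⟩ := ih j _ hrest
    have hsum : ∑ i, (Fin.cons (j - ∑ i, m i) m : Fin (ℓ + 1) → ℕ) i = j := by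
      rw [Fin.sum_univ_succ]
      simp only [Fin.cons_zero, Fin.cons_succ]
      omega
    refine ⟨Fin.cons (j - ∑ i, m i) m, hsum.trans_le hjk, ?_⟩
    rw [valB_succ, hsum]
    simp only [Fin.cons_succ, hvalm]
    omega

theorem valB_succ_surjective (ℓ : ℕ) : Function.Surjective (valB (ℓ + 1)) := fun n => by
  have hn : n < (n + (ℓ + 1)).choose (ℓ + 1) := by
    calc n < (n + 1).choose n := by rw [Nat.choose_succ_self_right]; exact n.lt_succ_self
      _ ≤ (n + (ℓ + 1)).choose n := Nat.choose_le_choose n (by omega)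
      _ = (n + (ℓ + 1)).choose (ℓ + 1) := Nat.choose_symm_add
  obtain ⟨m, -, hm⟩ := exists_valB_eq_of_lt_choose (ℓ + 1) n n hn
  exact ⟨m, hm⟩

/-- The `B_ℓ`-representation of `n` has length `k` iff
`C(k+ℓ−1, ℓ) ≤ n ≤ Σ_{i=1}^{ℓ} C(k+i−1, i)`. -/
theorem repB_length_iff (ℓ : ℕ) (hℓ : 1 ≤ ℓ) (n k : ℕ) :
    (∑ i : Fin ℓ, repB ℓ n i) = k ↔
      Nat.choose (k + ℓ - 1) ℓ ≤ n ∧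
        n ≤ ∑ i ∈ Finset.range ℓ, Nat.choose (k + i) (i + 1) := by
  obtain ⟨ℓ, rfl⟩ : ∃ ℓ', ℓ = ℓ' + 1 := ⟨ℓ - 1, by omega⟩
  have hval : valB (ℓ + 1) (repB (ℓ + 1) n) = n :=
    Function.invFun_eq (valB_succ_surjective ℓ n)
  have hmono : Monotone fun j => (j + ℓ).choose (ℓ + 1) :=
    fun _ _ h => Nat.choose_le_choose _ (by omega)
  have hlen : ((∑ i, repB (ℓ + 1) n i) + ℓ).choose (ℓ + 1) ≤ n ∧
      n < ((∑ i, repB (ℓ + 1) n i) + 1 + ℓ).choose (ℓ + 1) := by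
    refine ⟨(choose_le_valB_succ ℓ _).trans_eq hval, ?_⟩
    rw [add_assoc, add_comm 1]
    exact hval.symm.trans_lt (valB_lt_choose (ℓ + 1) _)
  rw [show k + (ℓ + 1) - 1 = k + ℓ by omega, ← Nat.lt_add_one_iff (m := n),
    sum_range_choose_add_succ_add_one, show k + (ℓ + 1) = k + 1 + ℓ by omega]
  exact ⟨by rintro rfl; exact hlen, hmono.eq_of_mem_Ico_succ hlen⟩
end

section
/- Let ℓ ≥ 1 be an integer. A set X ⊆ ℕ is B_ℓ-recognizable, i.e., the language {word(rep_ℓ(x)) : x ∈ X} is regular, if and only if rep_ℓ(X) ⊆ ℕ^ℓ is a finite union of sets of the form {(s_1 + k_1·t_1, s_2 + k_2·t_2, …, s_ℓ + k_ℓ·t_ℓ) : k_1,…,k_ℓ ∈ ℕ} with s_1,…,s_ℓ, t_1,…,t_ℓ ∈ ℕ (a semi-linear set all of whose periods are integer multiples of the canonical basis vectors). -/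
/-!
The language is the image of `S = repB ℓ '' X` under `wordB ℓ`, which is a bijection from `ℕ^ℓ`
onto the sorted words, inverted by counting letters; so the question is which `S ⊆ ℕ^ℓ` have a
regular image, and the numeration system plays no further role.

If a DFA accepts `wordB ℓ '' S`, reading a block `a_i^x` from a state `q` iterates the map
`(step · a_i)` on a finite set; its orbit is eventually periodic, so the exponents `x` leading to a
given state form a finite union of arithmetic progressions. Taking the union over the sequences of
states reached between blocks exhibits `S` as a finite union of boxes.

Conversely, the image of a box is the set of sorted words in which the count of each letter lies in
an arithmetic progression `s + ℕ t`; sortedness and each count condition (a counter capped at `s`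
and a counter modulo `t`) are recognized by small automata.
-/

def arithProg (s t : ℕ) : Set ℕ := {x | ∃ k, x = s + k * t}

theorem mem_arithProg_iff {s t x : ℕ} : x ∈ arithProg s t ↔ s ≤ x ∧ x ≡ s [MOD t] := by
  constructor
  · rintro ⟨k, rfl⟩
    exact ⟨Nat.le_add_right _ _, by simp [Nat.ModEq]⟩
  · rintro ⟨hsx, hmod⟩
    obtain ⟨k, hk⟩ := (Nat.modEq_iff_dvd' hsx).mp hmod.symm
    exact ⟨k, by rw [mul_comm, ← hk]; omega⟩

namespace Language

variable {α : Type*}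

theorem isRegular_setOf_iterate_count [DecidableEq α] (a : α) {σ : Type*} [Finite σ]
    (g : σ → σ) (p : σ) (F : Set σ) : Language.IsRegular {w : List α | g^[w.count a] p ∈ F} := by
  let M : DFA α σ := ⟨fun q b => if b = a then g q else q, p, F⟩
  have hM : ∀ w q, M.evalFrom q w = g^[w.count a] q := by
    intro w
    induction w with
    | nil => intro q; rfl
    | cons b w ih =>
      intro q
      by_cases hb : b = a <;> simp [M, DFA.evalFrom_cons, ih, hb]
  refine isRegular_iff.mpr ⟨σ, Fintype.ofFinite σ, M, ?_⟩
  ext w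
  simp [DFA.mem_accepts, DFA.eval, hM]
  rfl

theorem isRegular_setOf_le_count [DecidableEq α] (a : α) (r : ℕ) :
    Language.IsRegular {w : List α | r ≤ w.count a} := by
  let g : Fin (r + 1) → Fin (r + 1) := fun q => ⟨min (q + 1) r, by omega⟩
  have hg : ∀ n, g^[n] 0 = ⟨min n r, by omega⟩ := by
    intro n
    induction n with
    | zero => rfl
    | succ n ih => rw [Function.iterate_succ_apply', ih]; ext; simp [g]; omega
  simpa [hg] using isRegular_setOf_iterate_count a g 0 {q | (q : ℕ) = r}

theorem isRegular_setOf_count_modEq [DecidableEq α] (a : α) (r t : ℕ) :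
    Language.IsRegular {w : List α | w.count a ≡ r [MOD t]} := by
  -- `[MOD 0]` is equality, and `ZMod 0 = ℤ` is infinite.
  rcases Nat.eq_zero_or_pos t with rfl | ht
  · have h : {w : List α | w.count a ≡ r [MOD 0]} =
        {w : List α | r ≤ w.count a} ⊓ ({w : List α | r + 1 ≤ w.count a} : Language α)ᶜ := by
      ext w
      change w.count a % 0 = r % 0 ↔ r ≤ w.count a ∧ ¬ r + 1 ≤ w.count a
      omega
    rw [h]
    exact (isRegular_setOf_le_count a r).inf (isRegular_setOf_le_count a (r + 1)).compl
  · have : NeZero t := ⟨ht.ne'⟩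
    simpa [ZMod.natCast_eq_natCast_iff] using
      isRegular_setOf_iterate_count a (1 + · : ZMod t → ZMod t) 0 {(r : ZMod t)}

theorem isRegular_setOf_of_isRegular {ι : Type*} [Finite ι] {L : ι → Language α}
    (hL : ∀ i, (L i).IsRegular) (P : (ι → Prop) → Prop) :
    Language.IsRegular {w | P fun i => w ∈ L i} := by
  choose σ _ M hM using hL
  let N : DFA α (∀ i, σ i) :=
    ⟨fun q a i => (M i).step (q i) a, fun i => (M i).start, {q | P fun i => q i ∈ (M i).accept}⟩
  have hN : ∀ w q, N.evalFrom q w = fun i => (M i).evalFrom (q i) w := by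
    intro w
    induction w with
    | nil => intro q; rfl
    | cons a w ih => intro q; exact ih _
  refine isRegular_iff.mpr ⟨_, Fintype.ofFinite _, N, ?_⟩
  ext w
  simp only [DFA.mem_accepts, DFA.eval, hN, ← hM]
  rfl

theorem isRegular_setOf_sortedLE [LinearOrder α] [Finite α] :
    Language.IsRegular {w : List α | w.SortedLE} := by
  -- The state `some m` remembers the last letter read (`⊥` at the start); `none` is a sink.
  let M : DFA α (Option (WithBot α)) :=
    ⟨fun q a => q.bind fun m => if m ≤ a then some (a : WithBot α) else none, some ⊥,
      {q | q.isSome}⟩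
  have hnone : ∀ w, M.evalFrom none w = none := by
    intro w
    induction w with
    | nil => rfl
    | cons a w ih => exact ih
  have hM : ∀ w (m : WithBot α),
      (M.evalFrom (some m) w).isSome ↔ (∀ a ∈ w, m ≤ a) ∧ w.Pairwise (· ≤ ·) := by
    intro w
    induction w with
    | nil => simp [M]
    | cons a w ih =>
      intro m
      rw [DFA.evalFrom_cons]
      by_cases hma : m ≤ a
      · simp only [M, Option.bind_some, if_pos hma]
        rw [ih]
        simp only [List.forall_mem_cons, List.pairwise_cons, WithBot.coe_le_coe]
        constructor
        · rintro ⟨h1, h2⟩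
          exact ⟨⟨hma, fun b hb => hma.trans (WithBot.coe_le_coe.mpr (h1 b hb))⟩, h1, h2⟩
        · rintro ⟨-, h1, h2⟩
          exact ⟨h1, h2⟩
      · simp [M, hma, hnone]
  refine isRegular_iff.mpr ⟨_, Fintype.ofFinite _, M, ?_⟩
  ext w
  simp [DFA.mem_accepts, DFA.eval, M, hM, List.sortedLE_iff_pairwise]
  rfl

theorem isRegular_setOf_count_mem_arithProg [DecidableEq α] (a : α) (s t : ℕ) :
    Language.IsRegular {w : List α | w.count a ∈ arithProg s t} := by
  have h : {w : List α | w.count a ∈ arithProg s t} =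
      {w : List α | s ≤ w.count a} ⊓ {w : List α | w.count a ≡ s [MOD t]} := by
    ext w
    exact mem_arithProg_iff
  rw [h]
  exact (isRegular_setOf_le_count a s).inf (isRegular_setOf_count_modEq a s t)

end Language

section Box

variable {ι : Type*}

def box (s t : ι → ℕ) : Set (ι → ℕ) := Set.univ.pi fun i => arithProg (s i) (t i)

theorem box_eq_setOf (s t : ι → ℕ) :
    box s t = {n | ∃ k : ι → ℕ, ∀ i, n i = s i + k i * t i} := by
  ext n
  simp only [box, Set.mem_univ_pi]
  exact Classical.skolem

def IsBoxUnion (S : Set (ι → ℕ)) : Prop :=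
  ∃ P : Set ((ι → ℕ) × (ι → ℕ)), P.Finite ∧ S = ⋃ p ∈ P, box p.1 p.2

theorem isBoxUnion_iff_exists_fin {S : Set (ι → ℕ)} :
    IsBoxUnion S ↔ ∃ (m : ℕ) (s t : Fin m → ι → ℕ), S = ⋃ r, box (s r) (t r) := by
  constructor
  · rintro ⟨P, hP, rfl⟩
    have := hP.to_subtype
    obtain ⟨m, ⟨e⟩⟩ := Finite.exists_equiv_fin P
    refine ⟨m, fun r => (e.symm r).1.1, fun r => (e.symm r).1.2, ?_⟩
    rw [Set.biUnion_eq_iUnion, ← e.symm.surjective.iUnion_comp]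
  · rintro ⟨m, s, t, rfl⟩
    refine ⟨Set.range fun r => (s r, t r), Set.finite_range _, ?_⟩
    rw [Set.biUnion_range]

theorem IsBoxUnion.iUnion {κ : Type*} [Finite κ] {S : κ → Set (ι → ℕ)}
    (hS : ∀ j, IsBoxUnion (S j)) : IsBoxUnion (⋃ j, S j) := by
  choose P hP hSP using hS
  exact ⟨⋃ j, P j, Set.finite_iUnion hP, by simp only [hSP, Set.biUnion_iUnion]⟩

theorem isBoxUnion_of_isEmpty [IsEmpty ι] (S : Set (ι → ℕ)) : IsBoxUnion S := by
  rcases S.eq_empty_or_nonempty with rfl | hS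
  · exact ⟨∅, Set.finite_empty, by simp⟩
  · refine ⟨{(0, 0)}, Set.finite_singleton _, ?_⟩
    ext n
    simp [box, hS.eq_univ]

end Box

theorem mem_box_cons {k : ℕ} (a b : ℕ) (s t : Fin k → ℕ) (n : Fin (k + 1) → ℕ) :
    n ∈ box (Fin.cons a s : Fin (k + 1) → ℕ) (Fin.cons b t) ↔
      n 0 ∈ arithProg a b ∧ Fin.tail n ∈ box s t := by
  simp [box, Fin.forall_fin_succ, Fin.tail]

theorem IsBoxUnion.finCons {k : ℕ} {T : Set (Fin k → ℕ)} (hT : IsBoxUnion T)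
    {Q : Set (ℕ × ℕ)} (hQ : Q.Finite) :
    IsBoxUnion {n : Fin (k + 1) → ℕ | n 0 ∈ ⋃ q ∈ Q, arithProg q.1 q.2 ∧ Fin.tail n ∈ T} := by
  obtain ⟨P, hP, rfl⟩ := hT
  refine ⟨Set.image2 (fun q p => (Fin.cons q.1 p.1, Fin.cons q.2 p.2)) Q P, hQ.image2 _ hP, ?_⟩
  ext n
  simp only [Set.mem_iUnion, Set.mem_image2]
  constructor
  · rintro ⟨⟨q, hq, hn0⟩, p, hp, hnt⟩
    exact ⟨_, ⟨q, hq, p, hp, rfl⟩, (mem_box_cons _ _ _ _ n).mpr ⟨hn0, hnt⟩⟩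
  · rintro ⟨_, ⟨q, hq, p, hp, rfl⟩, hn⟩
    obtain ⟨hn0, hnt⟩ := (mem_box_cons _ _ _ _ n).mp hn
    exact ⟨⟨q, hq, hn0⟩, p, hp, hnt⟩

theorem Function.IsPeriodicPt.iterate_eq_iterate_add_mod {σ : Type*} {g : σ → σ} {p : σ}
    {N T : ℕ} (h : Function.IsPeriodicPt g T (g^[N] p)) {x : ℕ} (hx : N ≤ x) :
    g^[x] p = g^[N + (x - N) % T] p := by
  rw [← Nat.sub_add_cancel hx, Function.iterate_add_apply, ← h.iterate_mod_apply,
    ← Function.iterate_add_apply, Nat.add_sub_cancel, add_comm]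

theorem exists_finite_setOf_iterate_eq_biUnion_arithProg {σ : Type*} [Finite σ]
    (g : σ → σ) (p q : σ) :
    ∃ Q : Set (ℕ × ℕ), Q.Finite ∧ {x | g^[x] p = q} = ⋃ j ∈ Q, arithProg j.1 j.2 := by
  obtain ⟨x, y, hxy, hfe⟩ := Finite.exists_ne_map_eq_of_infinite fun n : ℕ => g^[n] p
  obtain ⟨N, T, hT, hper⟩ : ∃ N T, 0 < T ∧ Function.IsPeriodicPt g T (g^[N] p) := by
    rcases hxy.lt_or_gt with h | h
    · refine ⟨x, y - x, by omega, ?_⟩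
      rw [Function.IsPeriodicPt, Function.IsFixedPt, ← Function.iterate_add_apply,
        Nat.sub_add_cancel h.le]
      exact hfe.symm
    · refine ⟨y, x - y, by omega, ?_⟩
      rw [Function.IsPeriodicPt, Function.IsFixedPt, ← Function.iterate_add_apply,
        Nat.sub_add_cancel h.le]
      exact hfe
  have hreduce : ∀ x, N ≤ x → g^[x] p = g^[N + (x - N) % T] p :=
    fun x hx => hper.iterate_eq_iterate_add_mod hx
  -- Hitting times `j < N` are isolated; from the preperiod `N` on they recur with period `T`.
  refine ⟨(fun j => (j, if j < N then 0 else T)) '' {j | j < N + T ∧ g^[j] p = q},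
    ((Set.finite_lt_nat (N + T)).subset fun j hj => hj.1).image _, ?_⟩
  ext x
  simp only [Set.mem_iUnion, Set.mem_image, exists_prop]
  constructor
  · intro hx
    by_cases hlt : x < N + T
    · exact ⟨_, ⟨x, ⟨hlt, hx⟩, rfl⟩, 0, by simp⟩
    · have hmod := Nat.mod_lt (x - N) hT
      refine ⟨_, ⟨N + (x - N) % T, ⟨by omega, hreduce x (by omega) ▸ hx⟩, rfl⟩,
        (x - N) / T, ?_⟩
      have := Nat.mod_add_div (x - N) T
      simp only [if_neg (show ¬ N + (x - N) % T < N by omega)]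
      rw [mul_comm]
      omega
  · rintro ⟨_, ⟨j, ⟨hjlt, hj⟩, rfl⟩, k, rfl⟩
    split_ifs with hjN
    · simpa using hj
    · show g^[j + k * T] p = q
      rw [hreduce _ (by omega), show j + k * T - N = j - N + k * T by omega,
        Nat.add_mul_mod_self_right, Nat.mod_eq_of_lt (by omega), Nat.add_sub_cancel' (by omega)]
      exact hj

theorem DFA.evalFrom_replicate_s9 {α σ : Type*} (M : DFA α σ) (q : σ) (a : α) (x : ℕ) :
    M.evalFrom q (List.replicate x a) = (M.step · a)^[x] q := by
  induction x generalizing q with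
  | zero => rfl
  | succ x ih => rw [List.replicate_succ, DFA.evalFrom_cons, ih, Function.iterate_succ_apply]

theorem isBoxUnion_setOf_evalFrom_flatten {α σ : Type*} [Finite σ] (M : DFA α σ) {k : ℕ}
    (c : Fin k → α) (p : σ) (F : Set σ) :
    IsBoxUnion {n : Fin k → ℕ |
      M.evalFrom p (List.ofFn fun i => List.replicate (n i) (c i)).flatten ∈ F} := by
  induction k generalizing p with
  | zero => exact isBoxUnion_of_isEmpty _
  | succ k ih =>
    have hsplit : {n : Fin (k + 1) → ℕ |
        M.evalFrom p (List.ofFn fun i => List.replicate (n i) (c i)).flatten ∈ F} =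
        ⋃ q, {n : Fin (k + 1) → ℕ | n 0 ∈ {x | (M.step · (c 0))^[x] p = q} ∧
          Fin.tail n ∈ {n' : Fin k → ℕ |
          M.evalFrom q (List.ofFn fun i => List.replicate (n' i) (Fin.tail c i)).flatten ∈ F}} := by
      ext n
      simp only [Set.mem_iUnion, List.ofFn_succ, List.flatten_cons, DFA.evalFrom_of_append,
        DFA.evalFrom_replicate_s9]
      constructor
      · exact fun h => ⟨_, rfl, h⟩
      · rintro ⟨q, rfl, h⟩
        exact h
    rw [hsplit]
    refine IsBoxUnion.iUnion fun q => ?_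
    obtain ⟨Q, hQ, hQeq⟩ := exists_finite_setOf_iterate_eq_biUnion_arithProg (M.step · (c 0)) p q
    rw [hQeq]
    exact (ih (Fin.tail c) q).finCons hQ

section Words

variable {ℓ : ℕ}

theorem count_wordB (n : Fin ℓ → ℕ) (i : Fin ℓ) : (wordB ℓ n).count i = n i := by
  simp [wordB, List.count_flatten, List.map_ofFn, List.sum_ofFn, List.count_replicate]

theorem sortedLE_wordB (n : Fin ℓ → ℕ) : (wordB ℓ n).SortedLE := by
  rw [List.sortedLE_iff_pairwise, wordB, List.pairwise_flatten, List.pairwise_ofFn]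
  refine ⟨fun l hl => ?_, fun i j hij x hx y hy => ?_⟩
  · obtain ⟨i, rfl⟩ := List.mem_ofFn.mp hl
    exact List.pairwise_replicate_of_refl
  · rw [List.eq_of_mem_replicate hx, List.eq_of_mem_replicate hy]
    exact hij.le

theorem wordB_injective : Function.Injective (wordB ℓ) := fun n m h =>
  funext fun i => by rw [← count_wordB n i, ← count_wordB m i, h]

theorem wordB_count_eq_of_sortedLE {w : List (Fin ℓ)} (hw : w.SortedLE) :
    wordB ℓ (fun i => w.count i) = w :=
  List.Perm.eq_of_sortedLE (sortedLE_wordB _) hw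
    (List.perm_iff_count.mpr fun i => count_wordB _ i)

theorem image_wordB (S : Set (Fin ℓ → ℕ)) :
    wordB ℓ '' S = {w | w.SortedLE ∧ (fun i => w.count i) ∈ S} := by
  ext w
  constructor
  · rintro ⟨n, hn, rfl⟩
    refine ⟨sortedLE_wordB n, ?_⟩
    simpa only [count_wordB] using hn
  · rintro ⟨hw, hS⟩
    exact ⟨_, hS, wordB_count_eq_of_sortedLE hw⟩

theorem isRegular_image_wordB_iff (S : Set (Fin ℓ → ℕ)) :
    Language.IsRegular (wordB ℓ '' S) ↔ IsBoxUnion S := by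
  constructor
  · rintro ⟨σ, _, M, hM⟩
    rw [← Set.preimage_image_eq S wordB_injective, ← hM]
    exact isBoxUnion_setOf_evalFrom_flatten M id M.start M.accept
  · rintro ⟨P, hP, rfl⟩
    have heq : (wordB ℓ '' ⋃ p ∈ P, box p.1 p.2 : Language (Fin ℓ)) =
        {w : List (Fin ℓ) | w.SortedLE} ⊓
          {w | ∃ p : P, ∀ i, w.count i ∈ arithProg (p.1.1 i) (p.1.2 i)} := by
      ext w
      change w ∈ wordB ℓ '' _ ↔ w.SortedLE ∧ ∃ p : P, ∀ i, _
      simp [image_wordB, box]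
    have := hP.to_subtype
    rw [heq]
    exact Language.isRegular_setOf_sortedLE.inf <|
      Language.isRegular_setOf_of_isRegular
        (fun x : P × Fin ℓ => Language.isRegular_setOf_count_mem_arithProg x.2
          (x.1.1.1 x.2) (x.1.1.2 x.2)) fun f => ∃ p, ∀ i, f (p, i)

end Words

theorem Bl_recognizable_iff_semilinear_general (ℓ : ℕ) (X : Set ℕ) :
    Language.IsRegular {w : List (Fin ℓ) | ∃ x ∈ X, w = wordB ℓ (repB ℓ x)} ↔
      ∃ (m : ℕ) (s t : Fin m → Fin ℓ → ℕ),
        repB ℓ '' X =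
          ⋃ r : Fin m, {n : Fin ℓ → ℕ | ∃ k : Fin ℓ → ℕ, ∀ i, n i = s r i + k i * t r i} := by
  have hL : {w : List (Fin ℓ) | ∃ x ∈ X, w = wordB ℓ (repB ℓ x)} = wordB ℓ '' (repB ℓ '' X) := by
    ext w
    simp [eq_comm]
  rw [hL, isRegular_image_wordB_iff, isBoxUnion_iff_exists_fin]
  simp only [box_eq_setOf]

/-- `X ⊆ ℕ` is `B_ℓ`-recognizable iff `repB ℓ '' X ⊆ ℕ^ℓ` is a finite union of linear
sets all of whose periods are integer multiples of the canonical basis vectors. -/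
theorem Bl_recognizable_iff_semilinear (ℓ : ℕ) (hℓ : 1 ≤ ℓ) (X : Set ℕ) :
    Language.IsRegular {w : List (Fin ℓ) | ∃ x ∈ X, w = wordB ℓ (repB ℓ x)} ↔
      ∃ (m : ℕ) (s t : Fin m → Fin ℓ → ℕ),
        repB ℓ '' X =
          ⋃ r : Fin m, {n : Fin ℓ → ℕ | ∃ k : Fin ℓ → ℕ, ∀ i, n i = s r i + k i * t r i} :=
  Bl_recognizable_iff_semilinear_general ℓ X
end

section
/- Let ℓ ≥ 1, p ≥ 1 and q ≥ 0 be integers. Then there exists an integer P ≥ 1 such that val_ℓ(n + P·e_i) ≡ val_ℓ(n) (mod p) for every n ∈ ℕ^ℓ and every i ∈ {1,…,ℓ}, where e_i denotes the i-th canonical basis vector of ℕ^ℓ. Consequently, the set rep_ℓ({q + kp : k ∈ ℕ}) = {n ∈ ℕ^ℓ : val_ℓ(n) ∈ {q + kp : k ∈ ℕ}} is a finite union of linear sets of the form x + ℕ·P·e_1 + ⋯ + ℕ·P·e_ℓ with x ∈ ℕ^ℓ. -/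
/-!
`C(x, k)` is periodic modulo `p` in `x` with period `p * k!`: by Vandermonde,
`C(x + m, k) = Σ_{i + j = k} C(x, i) C(m, j)`, and `p ∣ C(m, j)` for `1 ≤ j ≤ k` because
`j * C(m, j) = m * C(m - 1, j - 1)` and `p * j ∣ m`. Every summand of `valB ℓ` is such a binomial
coefficient with `k ≤ ℓ` in a tail sum of the coordinates, so `P = p * ℓ!` is a period of
`valB ℓ` modulo `p` in each coordinate.

For the second part, the set `S` of representations of `q + pℕ` is stable under adding multiples
of `P` to coordinates (by periodicity and monotonicity of `valB ℓ`) and under reducing every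
coordinate `≥ q` modulo `P` into `[q, q + P)` (a coordinate `≥ q` already forces `valB ℓ ≥ q`). Hence `S` is the union of
the linear sets based at its finitely many points in the box `[0, q + P)^ℓ`.
-/

open Finset
open scoped Nat

namespace Nat

theorem dvd_choose_of_mul_dvd {p j m : ℕ} (hj : 0 < j) (h : p * j ∣ m) : p ∣ m.choose j := by
  obtain ⟨t, rfl⟩ := h
  obtain ⟨j, rfl⟩ := exists_eq_add_one.2 hj
  rcases eq_zero_or_pos (p * (j + 1) * t) with hm | hm
  · simp [hm]
  obtain ⟨n, hn⟩ := exists_eq_add_one.2 hm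
  have hmul : (n + 1).choose (j + 1) * (j + 1) = p * t * n.choose j * (j + 1) := by
    rw [← add_one_mul_choose_eq, ← hn]; ring
  rw [hn, eq_of_mul_eq_mul_right (succ_pos j) hmul, mul_assoc]
  exact dvd_mul_right p _

theorem choose_add_modEq (x : ℕ) {p k m : ℕ} (h : p * k ! ∣ m) :
    (x + m).choose k ≡ x.choose k [MOD p] := by
  rw [add_choose_eq]
  refine (sum_modEq_single (a := (k, 0)) (by simp) fun ij hij hne => ?_).trans (by simp [ModEq])
  rw [HasAntidiagonal.mem_antidiagonal] at hij
  have hj : 0 < ij.2 := pos_of_ne_zero fun h0 => hne (Prod.ext (by omega) h0)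
  have hdvd : p * ij.2 ∣ m := (mul_dvd_mul_left p (dvd_factorial hj (by omega))).trans h
  exact modEq_zero_iff_dvd.2 (dvd_mul_of_dvd_right (dvd_choose_of_mul_dvd hj hdvd) _)

theorem le_choose_add_succ (s c : ℕ) : s ≤ (s + c).choose (c + 1) := by
  rcases s with _ | s
  · exact zero_le _
  calc s + 1 = (s + 1).choose s := (choose_succ_self_right s).symm
    _ ≤ (s + (c + 1)).choose s := choose_le_choose s (by omega)
    _ = (s + 1 + c).choose (c + 1) := by rw [choose_symm_add]; ring_nf

theorem exists_eq_add_mul_iff {v q p : ℕ} : (∃ k, v = q + k * p) ↔ q ≤ v ∧ v ≡ q [MOD p] := by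
  constructor
  · rintro ⟨k, rfl⟩
    exact ⟨le_add_right q _, add_mul_mod_self_right q k p⟩
  · rintro ⟨hle, hmod⟩
    obtain ⟨k, hk⟩ := (modEq_iff_dvd' hle).1 hmod.symm
    exact ⟨k, by rw [mul_comm, ← hk, Nat.add_sub_cancel' hle]⟩

end Nat

section LinearSet

variable {ι : Type*}

def linearSet (P : ℕ) (x : ι → ℕ) : Set (ι → ℕ) :=
  {n | ∃ k : ι → ℕ, ∀ i, n i = x i + P * k i}

def reduceAbove (N P a : ℕ) : ℕ :=
  if a < N then a else N + (a - N) % P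

theorem le_of_mem_linearSet {P : ℕ} {x n : ι → ℕ} (h : n ∈ linearSet P x) : x ≤ n := by
  obtain ⟨k, hk⟩ := h
  intro i
  rw [hk i]
  exact Nat.le_add_right _ _

theorem reduceAbove_lt {N P : ℕ} (hP : 0 < P) (a : ℕ) : reduceAbove N P a < N + P := by
  unfold reduceAbove
  split_ifs
  · omega
  · have := Nat.mod_lt (a - N) hP
    omega

theorem le_reduceAbove {N P a : ℕ} (h : N ≤ a) : N ≤ reduceAbove N P a := by
  unfold reduceAbove
  split_ifs <;> omega

theorem reduceAbove_of_lt {N P a : ℕ} (h : a < N) : reduceAbove N P a = a := if_pos h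

theorem mem_linearSet_reduceAbove (N P : ℕ) (n : ι → ℕ) :
    n ∈ linearSet P (fun i => reduceAbove N P (n i)) := by
  refine ⟨fun i => if n i < N then 0 else (n i - N) / P, fun i => ?_⟩
  simp only [reduceAbove]
  split_ifs with h
  · simp
  · have := Nat.mod_add_div (n i - N) P
    omega

theorem exists_eq_iUnion_linearSet [Finite ι] {S : Set (ι → ℕ)} {N P : ℕ} (hP : 0 < P)
    (hadd : ∀ x ∈ S, linearSet P x ⊆ S)
    (hreduce : ∀ n ∈ S, (fun i => reduceAbove N P (n i)) ∈ S) :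
    ∃ (m : ℕ) (x : Fin m → ι → ℕ), S = ⋃ r, linearSet P (x r) := by
  have hfin : (S ∩ {x | ∀ i, x i ∈ Set.Iio (N + P)}).Finite :=
    (Set.Finite.pi' fun _ => Set.finite_Iio _).inter_of_right S
  obtain ⟨m, x, hx⟩ := hfin.fin_embedding
  refine ⟨m, x, Set.Subset.antisymm (fun n hn => ?_) (Set.iUnion_subset fun r => ?_)⟩
  · have hmem : (fun i => reduceAbove N P (n i)) ∈ Set.range x :=
      hx ▸ ⟨hreduce n hn, fun i => reduceAbove_lt hP (n i)⟩
    obtain ⟨r, hr⟩ := hmem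
    exact Set.mem_iUnion.2 ⟨r, hr ▸ mem_linearSet_reduceAbove N P n⟩
  · exact hadd _ (hx.symm ▸ Set.mem_range_self r : x r ∈ S ∩ _).1

end LinearSet

section valB

variable {ℓ : ℕ}

theorem valB_modEq_of_mem_linearSet {p : ℕ} {n x : Fin ℓ → ℕ}
    (h : n ∈ linearSet (p * ℓ !) x) : valB ℓ n ≡ valB ℓ x [MOD p] := by
  obtain ⟨k, hk⟩ := h
  refine Nat.ModEq.sum fun i _ => ?_
  have htail : ∑ j ∈ univ.filter (i ≤ ·), n j
      = ∑ j ∈ univ.filter (i ≤ ·), x j + p * ℓ ! * ∑ j ∈ univ.filter (i ≤ ·), k j := by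
    simp only [hk, sum_add_distrib, mul_sum]
  rw [htail, add_right_comm]
  refine Nat.choose_add_modEq _ (Dvd.dvd.mul_right ?_ _)
  exact mul_dvd_mul_left p (Nat.factorial_dvd_factorial (Nat.sub_le ℓ i))

theorem valB_mono : Monotone (valB ℓ) := fun n m h =>
  sum_le_sum fun _ _ => Nat.choose_le_choose _ (by gcongr with j; exact h j)

theorem le_valB (n : Fin ℓ → ℕ) (i : Fin ℓ) : n i ≤ valB ℓ n := by
  have hsucc : ℓ - (i : ℕ) = (ℓ - 1 - (i : ℕ)) + 1 := by omega
  calc n i ≤ ∑ j ∈ univ.filter (i ≤ ·), n j :=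
        single_le_sum (fun j _ => Nat.zero_le (n j)) (by simp)
    _ ≤ (∑ j ∈ univ.filter (i ≤ ·), n j + (ℓ - 1 - (i : ℕ))).choose (ℓ - (i : ℕ)) := by
        rw [hsucc]; exact Nat.le_choose_add_succ _ _
    _ ≤ valB ℓ n := by
        rw [valB, ← add_sum_erase _ _ (mem_univ i)]; exact Nat.le_add_right _ _

theorem valB_update_add_modEq (p : ℕ) (n : Fin ℓ → ℕ) (i : Fin ℓ) :
    valB ℓ (Function.update n i (n i + p * ℓ !)) ≡ valB ℓ n [MOD p] := by
  refine valB_modEq_of_mem_linearSet ⟨Pi.single i 1, fun j => ?_⟩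
  rcases eq_or_ne j i with rfl | hj <;> simp [*]

theorem le_valB_reduceAbove {q : ℕ} (P : ℕ) {n : Fin ℓ → ℕ} (h : q ≤ valB ℓ n) :
    q ≤ valB ℓ (fun i => reduceAbove q P (n i)) := by
  by_cases hlarge : ∃ i, q ≤ n i
  · obtain ⟨i, hi⟩ := hlarge
    exact (le_reduceAbove hi).trans (le_valB (fun i => reduceAbove q P (n i)) i)
  · push Not at hlarge
    simpa only [reduceAbove_of_lt (hlarge _)] using h

end valB

theorem repB_arithmetic_progression_semilinear_general (ℓ p q : ℕ) (hp : 1 ≤ p) :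
    ∃ P : ℕ, 1 ≤ P ∧
      (∀ (n : Fin ℓ → ℕ) (i : Fin ℓ),
        valB ℓ (Function.update n i (n i + P)) ≡ valB ℓ n [MOD p]) ∧
      (∃ (m : ℕ) (x : Fin m → Fin ℓ → ℕ),
        {n : Fin ℓ → ℕ | ∃ k : ℕ, valB ℓ n = q + k * p} =
          ⋃ r : Fin m, {n : Fin ℓ → ℕ | ∃ k : Fin ℓ → ℕ, ∀ i, n i = x r i + P * k i}) := by
  have hP : 0 < p * ℓ ! := Nat.mul_pos hp (Nat.factorial_pos ℓ)
  refine ⟨p * ℓ !, hP, valB_update_add_modEq p, ?_⟩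
  simp_rw [Nat.exists_eq_add_mul_iff]
  refine exists_eq_iUnion_linearSet (N := q) hP (fun x hx n hn => ⟨?_, ?_⟩) (fun n hn => ⟨?_, ?_⟩)
  · exact hx.1.trans (valB_mono (le_of_mem_linearSet hn))
  · exact (valB_modEq_of_mem_linearSet hn).trans hx.2
  · exact le_valB_reduceAbove _ hn.1
  · exact (valB_modEq_of_mem_linearSet (mem_linearSet_reduceAbove q _ n)).symm.trans hn.2

/-- There is a period `P ≥ 1` such that `valB ℓ` is invariant modulo `p` under adding `P`
to any single coordinate; consequently the set of `B_ℓ`-representations of an arithmetic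
progression is a finite union of linear sets with periods `P·e_1, …, P·e_ℓ`. -/
theorem repB_arithmetic_progression_semilinear (ℓ p q : ℕ) (hℓ : 1 ≤ ℓ) (hp : 1 ≤ p) :
    ∃ P : ℕ, 1 ≤ P ∧
      (∀ (n : Fin ℓ → ℕ) (i : Fin ℓ),
        valB ℓ (Function.update n i (n i + P)) ≡ valB ℓ n [MOD p]) ∧
      (∃ (m : ℕ) (x : Fin m → Fin ℓ → ℕ),
        {n : Fin ℓ → ℕ | ∃ k : ℕ, valB ℓ n = q + k * p} =
          ⋃ r : Fin m, {n : Fin ℓ → ℕ | ∃ k : Fin ℓ → ℕ, ∀ i, n i = x r i + P * k i}) :=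
  repB_arithmetic_progression_semilinear_general ℓ p q hp
end

section
/- Let ℓ ≥ 1 and β ≥ 1 be integers and let c_{ℓ−1}, c_{ℓ−2}, …, c_0 ∈ ℚ be defined by the stated recursion. Then for every q ∈ ℕ (indeed for every rational q): β^ℓ · Σ_{i=1}^{ℓ} binom(q+i−1, i) = Σ_{i=1}^{ℓ} binom(β·q + c_{i−1} + i − 1, i), where both sides are evaluated in ℚ. -/
/-- Unsigned Stirling numbers of the first kind: `x(x+1)⋯(x+i−1) = Σ_j S₁(i,j) x^j`,
with `S₁(i,j) = 0` for `j = 0` (or `i < j`). -/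
noncomputable def S1 (i j : ℕ) : ℕ := if j = 0 then 0 else (ascPochhammer ℕ i).coeff j

/-- Generalized binomial coefficient `binom(x, m) = x(x−1)⋯(x−m+1)/m!` over `ℚ`. -/
def qbinom (x : ℚ) (m : ℕ) : ℚ := (∏ j ∈ Finset.range m, (x - (j : ℚ))) / (Nat.factorial m : ℚ)

/-! Write `binom(x + i - 1, i) = Σ_j a_{ij} x^j` with `a_{ij} = S₁(i,j) / i!`, so that both
sides are polynomials in `q`. Expanding `(βq + c_{i-1})^j` binomially, the coefficient of `(βq)^m`
on the right is `Σ_i Σ_j a_{ij} C(j,m) c_{i-1}^{j-m}`. Its `j = m` part is `A_m = Σ_i a_{im}`,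
the coefficient of `q^m` in `Σ_i binom(q + i - 1, i)`, and the recursion for `c_m`, divided by
`m!` (the term `i = m + 1` contributes `c_m / m!`), says exactly that the part `j > m` equals
`(β^{ℓ-m} - 1) A_m`. Hence the coefficient of `q^m` is `β^ℓ A_m` on both sides. -/

open Finset Polynomial

lemma S1_cast_eq_coeff {R : Type*} [Semiring R] {n : ℕ} (hn : n ≠ 0) (j : ℕ) :
    (S1 n j : R) = (ascPochhammer R n).coeff j := by
  rw [← ascPochhammer_map (Nat.castRingHom R), coeff_map]
  rcases eq_or_ne j 0 with rfl | hj
  · simp [S1, coeff_zero_eq_eval_zero, hn]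
  · simp [S1, hj]

lemma S1_eq_zero_of_lt {i j : ℕ} (h : i < j) : S1 i j = 0 := by
  have : (ascPochhammer ℕ i).coeff j = 0 :=
    coeff_eq_zero_of_natDegree_lt (by rwa [ascPochhammer_natDegree])
  simp [S1, this]

lemma S1_self {n : ℕ} (hn : n ≠ 0) : S1 n n = 1 := by
  have h := (monic_ascPochhammer ℕ n).coeff_natDegree
  rw [ascPochhammer_natDegree] at h
  simp [S1, hn, h]

/-- The coefficient of `x ^ j` in `binom(x + i - 1, i)`. -/
noncomputable def binomPolyCoeff (i j : ℕ) : ℚ := (S1 i j : ℚ) / (Nat.factorial i : ℚ)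

lemma binomPolyCoeff_eq_zero_of_lt {i j : ℕ} (h : i < j) : binomPolyCoeff i j = 0 := by
  simp [binomPolyCoeff, S1_eq_zero_of_lt h]

lemma binomPolyCoeff_zero_left (j : ℕ) : binomPolyCoeff 0 j = 0 := by
  rcases eq_or_ne j 0 with rfl | hj
  · simp [binomPolyCoeff, S1]
  · exact binomPolyCoeff_eq_zero_of_lt (Nat.pos_of_ne_zero hj)

lemma binomPolyCoeff_succ_self_mul_choose (k : ℕ) :
    binomPolyCoeff (k + 1) (k + 1) * ((k + 1).choose k : ℚ) = 1 / (Nat.factorial k : ℚ) := by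
  rw [binomPolyCoeff, S1_self k.succ_ne_zero, Nat.choose_succ_self_right, Nat.factorial_succ]
  push_cast
  field_simp

lemma qbinom_add_eq_eval_ascPochhammer (x : ℚ) (n : ℕ) :
    qbinom (x + n) (n + 1) =
      (ascPochhammer ℚ (n + 1)).eval x / (Nat.factorial (n + 1) : ℚ) := by
  rw [qbinom, ← descPochhammer_eval_eq_prod_range, descPochhammer_eval_eq_ascPochhammer]
  push_cast
  ring_nf

lemma eval_ascPochhammer_div_factorial {n N : ℕ} (hn : n ≠ 0) (hnN : n ≤ N) (x : ℚ) :
    (ascPochhammer ℚ n).eval x / (Nat.factorial n : ℚ) =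
      ∑ j ∈ range (N + 1), binomPolyCoeff n j * x ^ j := by
  rw [eval_eq_sum_range' (n := N + 1) (by rw [ascPochhammer_natDegree]; omega), sum_div]
  refine sum_congr rfl fun j _ => ?_
  rw [binomPolyCoeff, S1_cast_eq_coeff hn]
  ring

lemma sum_qbinom_eq_sum_sum (ℓ : ℕ) (x : ℕ → ℚ) :
    ∑ i ∈ range ℓ, qbinom (x i + i) (i + 1) =
      ∑ i ∈ range (ℓ + 1), ∑ j ∈ range (ℓ + 1), binomPolyCoeff i j * x (i - 1) ^ j := by
  rw [sum_range_succ']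
  simp only [binomPolyCoeff_zero_left, zero_mul, sum_const_zero, add_zero, Nat.add_sub_cancel]
  refine sum_congr rfl fun i hi => ?_
  rw [qbinom_add_eq_eval_ascPochhammer,
    eval_ascPochhammer_div_factorial i.succ_ne_zero (by simpa using hi)]

lemma sum_sum_mul_add_pow {ι R : Type*} [CommSemiring R] (s : Finset ι) (N : ℕ)
    (b : ι → ℕ → R) (d : ι → R) (y : R) :
    ∑ i ∈ s, ∑ j ∈ range (N + 1), b i j * (y + d i) ^ j =
      ∑ m ∈ range (N + 1), y ^ m *
        ∑ i ∈ s, ∑ j ∈ range (N + 1), b i j * j.choose m * d i ^ (j - m) := by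
  have add_pow_range : ∀ i, ∀ j ∈ range (N + 1),
      (y + d i) ^ j = ∑ m ∈ range (N + 1), y ^ m * d i ^ (j - m) * j.choose m := by
    intro i j hj
    rw [add_pow]
    refine sum_subset (range_subset_range.mpr (by simpa using hj)) fun m _ hm => ?_
    rw [Nat.choose_eq_zero_of_lt (by simpa using hm), Nat.cast_zero, mul_zero]
  calc _ = ∑ i ∈ s, ∑ j ∈ range (N + 1), ∑ m ∈ range (N + 1),
        y ^ m * (b i j * j.choose m * d i ^ (j - m)) := by
        refine sum_congr rfl fun i _ => sum_congr rfl fun j hj => ?_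
        rw [add_pow_range i j hj, mul_sum]
        exact sum_congr rfl fun m _ => by ring
    _ = _ := by
        rw [sum_congr rfl fun i _ => sum_comm, sum_comm]
        simp only [mul_sum]

def ShiftRecursion (ℓ β : ℕ) (c : ℕ → ℚ) : Prop :=
  ∀ k < ℓ, c k =
      (Nat.factorial k : ℚ) * ((β : ℚ) ^ (ℓ - k) - 1) *
          (∑ i ∈ Icc k ℓ, (S1 i k : ℚ) / (Nat.factorial i : ℚ)) -
        ∑ i ∈ Icc (k + 2) ℓ, ∑ j ∈ Icc (k + 1) i,
          ((S1 i j : ℚ) * (Nat.factorial j : ℚ)) /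
              ((Nat.factorial i : ℚ) * (Nat.factorial (j - k) : ℚ)) *
            (c (i - 1)) ^ (j - k)

lemma S1_mul_factorial_div {i j k : ℕ} (hkj : k ≤ j) :
    (S1 i j : ℚ) * (Nat.factorial j : ℚ) /
        ((Nat.factorial i : ℚ) * (Nat.factorial (j - k) : ℚ)) =
      (Nat.factorial k : ℚ) * (binomPolyCoeff i j * j.choose k) := by
  rw [binomPolyCoeff, Nat.cast_choose ℚ hkj]
  field_simp

lemma sum_Icc_binomPolyCoeff (k ℓ : ℕ) :
    ∑ i ∈ Icc k ℓ, binomPolyCoeff i k = ∑ i ∈ range (ℓ + 1), binomPolyCoeff i k := by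
  refine sum_subset (fun i hi => by simp only [mem_Icc, mem_range] at hi ⊢; omega)
    fun i hiℓ hik => ?_
  exact binomPolyCoeff_eq_zero_of_lt (by simp only [mem_Icc, mem_range] at hiℓ hik; omega)

lemma sum_sum_binomPolyCoeff_mul_choose_eq_add {k ℓ : ℕ} (hk : k ≤ ℓ) (d : ℕ → ℚ) :
    ∑ i ∈ range (ℓ + 1), ∑ j ∈ range (ℓ + 1),
        binomPolyCoeff i j * j.choose k * d i ^ (j - k) =
      ∑ i ∈ range (ℓ + 1), binomPolyCoeff i k +
        ∑ i ∈ Icc (k + 1) ℓ, ∑ j ∈ Icc (k + 1) i,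
          binomPolyCoeff i j * j.choose k * d i ^ (j - k) := by
  have inner : ∀ i ∈ range (ℓ + 1),
      ∑ j ∈ range (ℓ + 1), binomPolyCoeff i j * j.choose k * d i ^ (j - k) =
        binomPolyCoeff i k +
          ∑ j ∈ Icc (k + 1) i, binomPolyCoeff i j * j.choose k * d i ^ (j - k) := by
    intro i hi
    have hsub : insert k (Icc (k + 1) i) ⊆ range (ℓ + 1) := by
      intro j hj
      simp only [mem_insert, mem_Icc, mem_range] at hi hj ⊢
      omega
    rw [← sum_subset hsub, sum_insert (by simp), Nat.choose_self, Nat.sub_self, pow_zero,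
      Nat.cast_one, mul_one, mul_one]
    intro j _ hj
    simp only [mem_insert, mem_Icc, not_or, not_and, not_le] at hj
    rcases lt_or_gt_of_ne hj.1 with hjk | hkj
    · rw [Nat.choose_eq_zero_of_lt hjk, Nat.cast_zero, mul_zero, zero_mul]
    · rw [binomPolyCoeff_eq_zero_of_lt (hj.2 hkj), zero_mul, zero_mul]
  have outer : ∑ i ∈ range (ℓ + 1), ∑ j ∈ Icc (k + 1) i,
        binomPolyCoeff i j * j.choose k * d i ^ (j - k) =
      ∑ i ∈ Icc (k + 1) ℓ, ∑ j ∈ Icc (k + 1) i,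
        binomPolyCoeff i j * j.choose k * d i ^ (j - k) := by
    refine (sum_subset (fun i hi => by simp only [mem_Icc, mem_range] at hi ⊢; omega)
      fun i hiℓ hik => ?_).symm
    rw [Icc_eq_empty (by simp only [mem_Icc, mem_range] at hiℓ hik; omega), sum_empty]
  rw [sum_congr rfl inner, sum_add_distrib, outer]

namespace ShiftRecursion

variable {ℓ β : ℕ} {c : ℕ → ℚ}

lemma sum_Icc_sum_Icc_eq (hc : ShiftRecursion ℓ β c) {k : ℕ} (hk : k < ℓ) :
    ∑ i ∈ Icc (k + 1) ℓ, ∑ j ∈ Icc (k + 1) i,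
        binomPolyCoeff i j * j.choose k * c (i - 1) ^ (j - k) =
      ((β : ℚ) ^ (ℓ - k) - 1) * ∑ i ∈ Icc k ℓ, binomPolyCoeff i k := by
  have hsum : ∑ i ∈ Icc (k + 2) ℓ, ∑ j ∈ Icc (k + 1) i,
        (S1 i j : ℚ) * (Nat.factorial j : ℚ) /
            ((Nat.factorial i : ℚ) * (Nat.factorial (j - k) : ℚ)) * c (i - 1) ^ (j - k) =
      (Nat.factorial k : ℚ) * ∑ i ∈ Icc (k + 2) ℓ, ∑ j ∈ Icc (k + 1) i,
        binomPolyCoeff i j * j.choose k * c (i - 1) ^ (j - k) := by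
    simp only [mul_sum]
    refine sum_congr rfl fun i _ => sum_congr rfl fun j hj => ?_
    rw [S1_mul_factorial_div (Nat.le_of_succ_le (mem_Icc.mp hj).1)]
    ring
  have hck := hc k hk
  rw [hsum] at hck
  simp only [← binomPolyCoeff.eq_1] at hck
  rw [← insert_Icc_add_one_left_eq_Icc (by omega : k + 1 ≤ ℓ), sum_insert (by simp), Icc_self,
    sum_singleton, Nat.add_sub_cancel, Nat.add_sub_cancel_left, pow_one,
    binomPolyCoeff_succ_self_mul_choose, hck, show k + 1 + 1 = k + 2 from rfl]
  field_simp
  ring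

lemma sum_sum_binomPolyCoeff_mul_choose_eq (hc : ShiftRecursion ℓ β c) {k : ℕ}
    (hk : k ≤ ℓ) :
    ∑ i ∈ range (ℓ + 1), ∑ j ∈ range (ℓ + 1),
        binomPolyCoeff i j * j.choose k * c (i - 1) ^ (j - k) =
      (β : ℚ) ^ (ℓ - k) * ∑ i ∈ range (ℓ + 1), binomPolyCoeff i k := by
  rw [sum_sum_binomPolyCoeff_mul_choose_eq_add hk]
  rcases hk.lt_or_eq with hk | rfl
  · rw [hc.sum_Icc_sum_Icc_eq hk, sum_Icc_binomPolyCoeff]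
    ring
  · simp

end ShiftRecursion

theorem pow_mul_val_eq_sum_binom_general (ℓ β : ℕ) (c : ℕ → ℚ)
    (hc : ∀ k < ℓ, c k =
      (Nat.factorial k : ℚ) * ((β : ℚ) ^ (ℓ - k) - 1) *
          (∑ i ∈ Finset.Icc k ℓ, (S1 i k : ℚ) / (Nat.factorial i : ℚ)) -
        ∑ i ∈ Finset.Icc (k + 2) ℓ, ∑ j ∈ Finset.Icc (k + 1) i,
          ((S1 i j : ℚ) * (Nat.factorial j : ℚ)) /
              ((Nat.factorial i : ℚ) * (Nat.factorial (j - k) : ℚ)) *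
            (c (i - 1)) ^ (j - k)) :
    ∀ q : ℚ,
      (β : ℚ) ^ ℓ * ∑ i ∈ Finset.range ℓ, qbinom (q + (i : ℚ)) (i + 1) =
        ∑ i ∈ Finset.range ℓ, qbinom ((β : ℚ) * q + c i + (i : ℚ)) (i + 1) := by
  intro q
  rw [sum_qbinom_eq_sum_sum ℓ (fun _ => q), sum_qbinom_eq_sum_sum ℓ (fun i => β * q + c i),
    sum_sum_mul_add_pow _ _ binomPolyCoeff (fun i => c (i - 1)) (β * q)]
  calc _ = ∑ m ∈ range (ℓ + 1), (β * q) ^ m * ((β : ℚ) ^ (ℓ - m) *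
          ∑ i ∈ range (ℓ + 1), binomPolyCoeff i m) := by
        rw [sum_comm, mul_sum]
        refine sum_congr rfl fun m hm => ?_
        rw [← sum_mul, ← pow_mul_pow_sub (β : ℚ) (by simpa using hm : m ≤ ℓ)]
        ring
    _ = _ := sum_congr rfl fun m hm => by
        rw [ShiftRecursion.sum_sum_binomPolyCoeff_mul_choose_eq hc (by simpa using hm : m ≤ ℓ)]

/-- With `c_{ℓ−1}, …, c_0` defined by the recursion
`c_k = k!(β^{ℓ−k}−1) Σ_{i=k}^{ℓ} S₁(i,k)/i! − Σ_{i=k+2}^{ℓ} Σ_{j=k+1}^{i} S₁(i,j)j!/(i!(j−k)!) c_{i−1}^{j−k}`,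
one has `β^ℓ Σ_{i=1}^{ℓ} binom(q+i−1, i) = Σ_{i=1}^{ℓ} binom(βq + c_{i−1} + i − 1, i)`
for every rational `q`. -/
theorem pow_mul_val_eq_sum_binom (ℓ β : ℕ) (hℓ : 1 ≤ ℓ) (hβ : 1 ≤ β) (c : ℕ → ℚ)
    (hc : ∀ k < ℓ, c k =
      (Nat.factorial k : ℚ) * ((β : ℚ) ^ (ℓ - k) - 1) *
          (∑ i ∈ Finset.Icc k ℓ, (S1 i k : ℚ) / (Nat.factorial i : ℚ)) -
        ∑ i ∈ Finset.Icc (k + 2) ℓ, ∑ j ∈ Finset.Icc (k + 1) i,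
          ((S1 i j : ℚ) * (Nat.factorial j : ℚ)) /
              ((Nat.factorial i : ℚ) * (Nat.factorial (j - k) : ℚ)) *
            (c (i - 1)) ^ (j - k)) :
    ∀ q : ℚ,
      (β : ℚ) ^ ℓ * ∑ i ∈ Finset.range ℓ, qbinom (q + (i : ℚ)) (i + 1) =
        ∑ i ∈ Finset.range ℓ, qbinom ((β : ℚ) * q + c i + (i : ℚ)) (i + 1) :=
  pow_mul_val_eq_sum_binom_general ℓ β c hc
end

section
/- Let β ≥ 1 be an integer and let c_{ℓ−1} and c_{ℓ−2} be defined by the stated recursion. Then for every ℓ ≥ 2, c_{ℓ−1} = (β−1)(ℓ+1)/2, and for every ℓ ≥ 3, c_{ℓ−2} = (β−1)(ℓ+1)/2 − (β²−1)(ℓ+1)/24. -/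
/-!
Only the two top steps of the recursion are involved. At `k = ℓ − 1` the double sum is empty and
the recursion evaluates `c_{ℓ−1}` from `S₁(k,k) = 1` and `S₁(k+1,k) = C(k+1,2)`. At `k = ℓ − 2` the
double sum reduces to the single row `i = ℓ`, a quadratic polynomial in the already known
`c_{ℓ−1}`, and the one new Stirling number is `S₁(k+2,k) = k(k+1)(k+2)(3k+5)/24`. The coefficients
of the rising factorial are Mathlib's `Nat.stirlingFirst`, since both satisfy the recurrence coming
from `x(x+1)⋯(x+n) = x(x+1)⋯(x+n−1) · (x+n)`.
-/

open Polynomial Nat Finset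

theorem ascPochhammer_nat_coeff (n k : ℕ) : (ascPochhammer ℕ n).coeff k = stirlingFirst n k := by
  induction n generalizing k with
  | zero => cases k <;> simp [coeff_one]
  | succ n ih =>
    rw [ascPochhammer_succ_right, ← C_eq_natCast, mul_add, coeff_add, coeff_mul_C]
    cases k with
    | zero => cases n <;> simp [ih]
    | succ k => rw [coeff_mul_X, ih, ih, stirlingFirst_succ_succ, Nat.cast_id]; ring

theorem S1_eq_stirlingFirst {i j : ℕ} (hj : j ≠ 0) : S1 i j = stirlingFirst i j := by
  rw [S1, if_neg hj, ascPochhammer_nat_coeff]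

theorem cast_stirlingFirst_add_two_self_left {K : Type*} [Field K] [CharZero K] (n : ℕ) :
    (stirlingFirst (n + 2) n : K) = n * (n + 1) * (n + 2) * (3 * n + 5) / 24 := by
  induction n with
  | zero => simp
  | succ n ih =>
    rw [stirlingFirst_succ_succ, stirlingFirst_succ_self_left]
    push_cast [ih, cast_choose_two]
    ring

theorem sum_Icc_self_add_one {M : Type*} [AddCommMonoid M] (f : ℕ → M) (a : ℕ) :
    ∑ i ∈ Icc a (a + 1), f i = f a + f (a + 1) := by
  rw [sum_Icc_succ_top (by omega), Icc_self, sum_singleton]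

theorem sum_Icc_self_add_two {M : Type*} [AddCommMonoid M] (f : ℕ → M) (a : ℕ) :
    ∑ i ∈ Icc a (a + 2), f i = f a + f (a + 1) + f (a + 2) := by
  rw [sum_Icc_succ_top (by omega), sum_Icc_self_add_one]

def RecursionHoldsAt (ℓ β : ℕ) (c : ℕ → ℚ) (k : ℕ) : Prop :=
  c k = (k ! : ℚ) * ((β : ℚ) ^ (ℓ - k) - 1) * (∑ i ∈ Icc k ℓ, (S1 i k : ℚ) / (i ! : ℚ)) -
    ∑ i ∈ Icc (k + 2) ℓ, ∑ j ∈ Icc (k + 1) i,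
      ((S1 i j : ℚ) * (j ! : ℚ)) / ((i ! : ℚ) * ((j - k) ! : ℚ)) * (c (i - 1)) ^ (j - k)

theorem RecursionHoldsAt.sub_one_eq {ℓ β : ℕ} {c : ℕ → ℚ} (hℓ : 2 ≤ ℓ)
    (h : RecursionHoldsAt ℓ β c (ℓ - 1)) : c (ℓ - 1) = ((β : ℚ) - 1) * ((ℓ : ℚ) + 1) / 2 := by
  obtain ⟨k, hk, rfl⟩ : ∃ k, k ≠ 0 ∧ ℓ = k + 1 := ⟨ℓ - 1, by omega, by omega⟩
  rw [Nat.add_sub_cancel] at h ⊢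
  rw [RecursionHoldsAt, Nat.add_sub_cancel_left, pow_one, sum_Icc_self_add_one,
    Icc_eq_empty (by omega), sum_empty, S1_eq_stirlingFirst hk, S1_eq_stirlingFirst hk,
    stirlingFirst_self, stirlingFirst_succ_self_left] at h
  rw [h]
  push_cast [factorial_succ, cast_choose_two]
  field_simp
  ring

theorem RecursionHoldsAt.sub_two_eq {ℓ β : ℕ} {c : ℕ → ℚ} (hℓ : 3 ≤ ℓ)
    (h : RecursionHoldsAt ℓ β c (ℓ - 2))
    (htop : c (ℓ - 1) = ((β : ℚ) - 1) * ((ℓ : ℚ) + 1) / 2) :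
    c (ℓ - 2) = ((β : ℚ) - 1) * ((ℓ : ℚ) + 1) / 2 - ((β : ℚ) ^ 2 - 1) * ((ℓ : ℚ) + 1) / 24 := by
  obtain ⟨k, hk, rfl⟩ : ∃ k, k ≠ 0 ∧ ℓ = k + 2 := ⟨ℓ - 2, by omega, by omega⟩
  rw [Nat.add_succ_sub_one] at htop
  rw [Nat.add_sub_cancel] at h ⊢
  rw [RecursionHoldsAt, sum_Icc_self_add_two, Icc_self, sum_singleton, sum_Icc_self_add_one,
    Nat.add_succ_sub_one, htop] at h
  simp only [S1_eq_stirlingFirst hk, S1_eq_stirlingFirst k.succ_ne_zero,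
    S1_eq_stirlingFirst (k + 1).succ_ne_zero, stirlingFirst_self, stirlingFirst_succ_self_left,
    cast_stirlingFirst_add_two_self_left, add_assoc, Nat.reduceAdd, Nat.add_sub_cancel_left,
    pow_one] at h
  rw [h]
  push_cast [factorial_succ, cast_choose_two]
  field_simp
  ring

theorem c_top_two_formulas_general (ℓ β : ℕ) (c : ℕ → ℚ)
    (hc : ∀ k < ℓ, c k =
      (Nat.factorial k : ℚ) * ((β : ℚ) ^ (ℓ - k) - 1) *
          (∑ i ∈ Finset.Icc k ℓ, (S1 i k : ℚ) / (Nat.factorial i : ℚ)) -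
        ∑ i ∈ Finset.Icc (k + 2) ℓ, ∑ j ∈ Finset.Icc (k + 1) i,
          ((S1 i j : ℚ) * (Nat.factorial j : ℚ)) /
              ((Nat.factorial i : ℚ) * (Nat.factorial (j - k) : ℚ)) *
            (c (i - 1)) ^ (j - k)) :
    (2 ≤ ℓ → c (ℓ - 1) = ((β : ℚ) - 1) * ((ℓ : ℚ) + 1) / 2) ∧
      (3 ≤ ℓ → c (ℓ - 2) =
        ((β : ℚ) - 1) * ((ℓ : ℚ) + 1) / 2 - ((β : ℚ) ^ 2 - 1) * ((ℓ : ℚ) + 1) / 24) := by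
  have htop (hℓ : 2 ≤ ℓ) := RecursionHoldsAt.sub_one_eq hℓ (hc (ℓ - 1) (by omega))
  exact ⟨htop, fun hℓ =>
    RecursionHoldsAt.sub_two_eq hℓ (hc (ℓ - 2) (by omega)) (htop (by omega))⟩

/-- Closed formulas for the two leading constants of the recursion:
`c_{ℓ−1} = (β−1)(ℓ+1)/2` for `ℓ ≥ 2`, and
`c_{ℓ−2} = (β−1)(ℓ+1)/2 − (β²−1)(ℓ+1)/24` for `ℓ ≥ 3`. -/
theorem c_top_two_formulas (ℓ β : ℕ) (hℓ : 1 ≤ ℓ) (hβ : 1 ≤ β) (c : ℕ → ℚ)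
    (hc : ∀ k < ℓ, c k =
      (Nat.factorial k : ℚ) * ((β : ℚ) ^ (ℓ - k) - 1) *
          (∑ i ∈ Finset.Icc k ℓ, (S1 i k : ℚ) / (Nat.factorial i : ℚ)) -
        ∑ i ∈ Finset.Icc (k + 2) ℓ, ∑ j ∈ Finset.Icc (k + 1) i,
          ((S1 i j : ℚ) * (Nat.factorial j : ℚ)) /
              ((Nat.factorial i : ℚ) * (Nat.factorial (j - k) : ℚ)) *
            (c (i - 1)) ^ (j - k)) :
    (2 ≤ ℓ → c (ℓ - 1) = ((β : ℚ) - 1) * ((ℓ : ℚ) + 1) / 2) ∧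
      (3 ≤ ℓ → c (ℓ - 2) =
        ((β : ℚ) - 1) * ((ℓ : ℚ) + 1) / 2 - ((β : ℚ) ^ 2 - 1) * ((ℓ : ℚ) + 1) / 24) :=
  c_top_two_formulas_general ℓ β c hc
end
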